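/- arXiv:2307.00425 — 9 statements merged into one kernel-verified Lean document; each statement's English description precedes it below -/
import Mathlib

section
/- Let S be a set of prime numbers and ℤ_S ⊆ ℚ the subring of rational numbers that are integral at every prime of S (i.e. whose denominator in lowest terms is divisible by no prime of S). Let G_S = GL₂⁺(ℤ_S) be the group of 2×2 matrices with entries in ℤ_S whose determinant is a positive unit of ℤ_S. Then G_S is generated by its subgroup T_S of diagonal matrices together with SL₂(ℤ); that is, the subgroup of GL₂(ℚ) generated by T_S ∪ SL₂(ℤ) equals G_S. -/
/-- `q ∈ ℤ_S`: the rational `q` is integral at every prime of `S`, i.e. its denominator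
(in lowest terms) is divisible by no prime of `S`. -/
def InZS (S : Set ℕ) (q : ℚ) : Prop := ∀ p ∈ S, ¬ (p ∣ q.den)

section helpers
variable {S : Set ℕ} (hS : ∀ p ∈ S, Nat.Prime p)
include hS

lemma InZS_intCast (n : ℤ) : InZS S (n : ℚ) := by
  intro p hp h
  simp [Rat.den_intCast] at h
  exact (hS p hp).one_lt.ne' h

lemma InZS_natCast (n : ℕ) : InZS S (n : ℚ) := by
  simpa using InZS_intCast hS (n : ℤ)

lemma InZS_one : InZS S 1 := by simpa using InZS_intCast hS 1

lemma InZS_mul {q r : ℚ} (hq : InZS S q) (hr : InZS S r) : InZS S (q * r) := by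
  intro p hp h
  have := (hS p hp).prime.dvd_or_dvd ((h.trans (Rat.mul_den_dvd q r)) : (p:ℕ) ∣ q.den * r.den)
  rcases this with h' | h'
  · exact hq p hp h'
  · exact hr p hp h'

lemma InZS_add {q r : ℚ} (hq : InZS S q) (hr : InZS S r) : InZS S (q + r) := by
  intro p hp h
  have := (hS p hp).prime.dvd_or_dvd ((h.trans (Rat.add_den_dvd q r)) : (p:ℕ) ∣ q.den * r.den)
  rcases this with h' | h'
  · exact hq p hp h'
  · exact hr p hp h'

lemma InZS_neg {q : ℚ} (hq : InZS S q) : InZS S (-q) := by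
  intro p hp h
  exact hq p hp (by simpa using h)

/-- If a divides n (integers) and 1/n is S-integral, so is 1/a. -/
lemma InZS_inv_of_dvd {a n : ℤ} (hdvd : a ∣ n) (hn : n ≠ 0) (h : InZS S ((n : ℚ))⁻¹) :
    InZS S ((a : ℚ))⁻¹ := by
  intro p hp hpd
  have ha : a ≠ 0 := by rintro rfl; exact hn (by simpa using hdvd)
  rw [Rat.inv_intCast_den, if_neg ha] at hpd
  apply h p hp
  rw [Rat.inv_intCast_den, if_neg hn]
  exact hpd.trans (Int.natAbs_dvd_natAbs.mpr hdvd)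

end helpers

/-- `G_S = GL₂⁺(ℤ_S)` viewed as a subset of `GL₂(ℚ)`: matrices with entries in `ℤ_S` whose
determinant is a positive unit of `ℤ_S`. -/
def GSset (S : Set ℕ) : Set (GL (Fin 2) ℚ) :=
  {γ | (∀ i j : Fin 2, InZS S ((γ : Matrix (Fin 2) (Fin 2) ℚ) i j)) ∧
    0 < (γ : Matrix (Fin 2) (Fin 2) ℚ).det ∧
    InZS S ((γ : Matrix (Fin 2) (Fin 2) ℚ).det) ∧
    InZS S (((γ : Matrix (Fin 2) (Fin 2) ℚ).det)⁻¹)}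

abbrev M2 := Matrix (Fin 2) (Fin 2) ℚ

noncomputable def mk2 (a b c e : ℚ) (h : a * e - b * c ≠ 0) : GL (Fin 2) ℚ :=
  Matrix.GeneralLinearGroup.mkOfDetNeZero !![a, b; c, e] (by rwa [Matrix.det_fin_two_of])

@[simp] lemma mk2_coe (a b c e : ℚ) (h) : ((mk2 a b c e h) : M2) = !![a, b; c, e] := rfl

section subgroup
variable {S : Set ℕ} (hS : ∀ p ∈ S, Nat.Prime p)
include hS

lemma GS_one : (1 : GL (Fin 2) ℚ) ∈ GSset S := by
  refine ⟨?_, ?_, ?_, ?_⟩ <;>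
    simp only [Units.val_one, Matrix.det_one, inv_one]
  · intro i j
    rw [Matrix.one_apply]
    split
    · exact InZS_one hS
    · simpa using InZS_intCast hS 0
  · norm_num
  · exact InZS_one hS
  · exact InZS_one hS

lemma GS_mul {γ δ : GL (Fin 2) ℚ} (hγ : γ ∈ GSset S) (hδ : δ ∈ GSset S) :
    γ * δ ∈ GSset S := by
  obtain ⟨h1, h2, h3, h4⟩ := hγ
  obtain ⟨g1, g2, g3, g4⟩ := hδ
  have hc : ((γ * δ : GL (Fin 2) ℚ) : M2) = (γ : M2) * (δ : M2) := rfl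
  refine ⟨?_, ?_, ?_, ?_⟩ <;> rw [hc]
  · intro i j
    rw [Matrix.mul_apply, Fin.sum_univ_two]
    exact InZS_add hS (InZS_mul hS (h1 i 0) (g1 0 j)) (InZS_mul hS (h1 i 1) (g1 1 j))
  · rw [Matrix.det_mul]; exact mul_pos h2 g2
  · rw [Matrix.det_mul]; exact InZS_mul hS h3 g3
  · rw [Matrix.det_mul, mul_inv]; exact InZS_mul hS h4 g4

lemma GS_inv {γ : GL (Fin 2) ℚ} (hγ : γ ∈ GSset S) : γ⁻¹ ∈ GSset S := by
  obtain ⟨h1, h2, h3, h4⟩ := hγ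
  have hc : ((γ⁻¹ : GL (Fin 2) ℚ) : M2) = (γ : M2)⁻¹ := Matrix.coe_units_inv γ
  have hd : ((γ : M2)⁻¹).det = ((γ : M2).det)⁻¹ := by
    rw [Matrix.det_nonsing_inv, Ring.inverse_eq_inv']
  refine ⟨?_, ?_, ?_, ?_⟩ <;> rw [hc]
  · intro i j
    rw [Matrix.inv_def, Ring.inverse_eq_inv', Matrix.adjugate_fin_two, Matrix.smul_apply,
      smul_eq_mul]
    fin_cases i <;> fin_cases j <;> simp <;>
    · first
      | exact InZS_mul hS h4 (h1 1 1)
      | exact InZS_mul hS h4 (InZS_neg hS (h1 0 1))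
      | exact InZS_mul hS h4 (InZS_neg hS (h1 1 0))
      | exact InZS_neg hS (InZS_mul hS h4 (h1 0 1))
      | exact InZS_neg hS (InZS_mul hS h4 (h1 1 0))
      | exact InZS_mul hS h4 (h1 0 0)
  · rw [hd]; exact inv_pos.mpr h2
  · rw [hd]; exact h4
  · rw [hd, inv_inv]; exact h3

end subgroup

/-- `T_S`: the diagonal matrices in `G_S`. -/
def TSset (S : Set ℕ) : Set (GL (Fin 2) ℚ) :=
  {γ | γ ∈ GSset S ∧ (γ : Matrix (Fin 2) (Fin 2) ℚ) 0 1 = 0 ∧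
    (γ : Matrix (Fin 2) (Fin 2) ℚ) 1 0 = 0}

/-- `SL₂(ℤ)` viewed as a subset of `GL₂(ℚ)`: integral matrices of determinant `1`. -/
def SL2Zset : Set (GL (Fin 2) ℚ) :=
  {γ | (∀ i j : Fin 2, ((γ : Matrix (Fin 2) (Fin 2) ℚ) i j).den = 1) ∧
    (γ : Matrix (Fin 2) (Fin 2) ℚ).det = 1}

lemma Int.natAbs_emod_lt' (a : ℤ) {c : ℤ} (h : c ≠ 0) : (a % c).natAbs < c.natAbs := by
  have h0 : 0 ≤ a % c := Int.emod_nonneg a h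
  have h1 : a % c < |c| := by
    rcases h.lt_or_gt with hc | hc
    · have := Int.emod_lt_of_pos a (neg_pos.mpr hc)
      rw [← Int.emod_neg] at this
      simpa [abs_of_neg hc] using this
    · simpa [abs_of_pos hc] using Int.emod_lt_of_pos a hc
  have := Int.natAbs_lt_natAbs_of_nonneg_of_lt h0 h1
  rwa [Int.natAbs_abs] at this

lemma fin2_ext {A B : M2} (h00 : A 0 0 = B 0 0) (h01 : A 0 1 = B 0 1)
    (h10 : A 1 0 = B 1 0) (h11 : A 1 1 = B 1 1) : A = B := by
  ext i j; fin_cases i <;> fin_cases j <;> assumption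

section gen
variable {S : Set ℕ} (hS : ∀ p ∈ S, Nat.Prime p)

local notation "H" => Subgroup.closure (TSset S ∪ SL2Zset)

/-- integer matrices of determinant one are in the closure -/
lemma sl_mem (a b c e : ℤ) (hdet : a * e - b * c = 1)
    (h : (a : ℚ) * e - (b : ℚ) * c ≠ 0) : mk2 (a : ℚ) b c e h ∈ H := by
  apply Subgroup.subset_closure
  right
  constructor
  · intro i j
    fin_cases i <;> fin_cases j <;> simp [mk2_coe]
  · rw [mk2_coe, Matrix.det_fin_two_of]
    exact_mod_cast hdet

include hS in
/-- diagonal matrices with S-unit entries and positive determinant are in the closure -/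
lemma diag_mem (q r : ℚ) (hq : InZS S q) (hq' : InZS S q⁻¹) (hr : InZS S r)
    (hr' : InZS S r⁻¹) (hpos : 0 < q * r) (h : q * r - 0 * 0 ≠ 0) :
    mk2 q 0 0 r h ∈ H := by
  apply Subgroup.subset_closure
  left
  refine ⟨⟨?_, ?_, ?_, ?_⟩, ?_, ?_⟩
  · intro i j
    fin_cases i <;> fin_cases j <;>
      simp only [mk2_coe, Matrix.cons_val', Matrix.cons_val_zero, Matrix.cons_val_one,
        Matrix.head_cons, Matrix.empty_val', Matrix.cons_val_fin_one, Matrix.head_fin_const] <;>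
      first
        | exact hq
        | exact hr
        | simpa using InZS_intCast hS 0
  · rw [mk2_coe, Matrix.det_fin_two_of]; simpa using hpos
  · rw [mk2_coe, Matrix.det_fin_two_of]
    simpa using InZS_mul hS hq hr
  · rw [mk2_coe, Matrix.det_fin_two_of]
    rw [show q * r - 0 * 0 = q * r by ring, mul_inv]
    exact InZS_mul hS hq' hr'
  · simp [mk2_coe]
  · simp [mk2_coe]

include hS in
/-- upper unitriangular matrices with S-integral entry are in the closure -/
lemma unitri_mem (q : ℚ) (hq : InZS S q) (h : (1:ℚ) * 1 - q * 0 ≠ 0) :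
    mk2 1 q 0 1 h ∈ H := by
  have hd0 : (0:ℚ) < (q.den : ℚ) := by positivity
  have hdne : ((q.den : ℚ)) ≠ 0 := hd0.ne'
  have hdden : InZS S ((q.den : ℚ))⁻¹ := by
    intro p hp hpd
    rw [Rat.inv_natCast_den, if_neg q.den_pos.ne'] at hpd
    exact hq p hp hpd
  have hA : mk2 ((q.den : ℚ))⁻¹ 0 0 1
      (by simpa using (inv_pos.mpr hd0).ne') ∈ H := by
    apply diag_mem hS
    · exact hdden
    · rw [inv_inv]; exact InZS_natCast hS q.den
    · exact InZS_one hS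
    · rw [inv_one]; exact InZS_one hS
    · simpa using inv_pos.mpr hd0
  have hB : mk2 ((1:ℤ) : ℚ) ((q.num : ℤ) : ℚ) ((0:ℤ) : ℚ) ((1:ℤ) : ℚ)
      (by norm_num) ∈ H := sl_mem 1 q.num 0 1 (by ring) (by norm_num)
  have hC : mk2 ((q.den : ℚ)) 0 0 1 (by simpa using hdne) ∈ H := by
    apply diag_mem hS
    · exact InZS_natCast hS q.den
    · exact hdden
    · exact InZS_one hS
    · rw [inv_one]; exact InZS_one hS
    · simpa using hd0
  have key : mk2 ((q.den : ℚ))⁻¹ 0 0 1 (by simpa using (inv_pos.mpr hd0).ne') *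
      mk2 ((1:ℤ) : ℚ) ((q.num : ℤ) : ℚ) ((0:ℤ) : ℚ) ((1:ℤ) : ℚ) (by norm_num) *
      mk2 ((q.den : ℚ)) 0 0 1 (by simpa using hdne) = mk2 1 q 0 1 h := by
    apply Units.ext
    rw [Units.val_mul, Units.val_mul, mk2_coe, mk2_coe, mk2_coe, mk2_coe]
    apply fin2_ext <;>
      simp [Matrix.mul_apply, Fin.sum_univ_two] <;>
      field_simp <;>
      simp [Rat.num_div_den, mul_comm]
  exact key ▸ mul_mem (mul_mem hA hB) hC

include hS in
/-- base case: lower-left entry zero -/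
lemma red0 (a b e : ℤ) (hpos : 0 < a * e - b * 0)
    (hu : InZS S (((a * e - b * 0 : ℤ) : ℚ))⁻¹)
    (h : (a:ℚ) * e - (b:ℚ) * ((0:ℤ):ℚ) ≠ 0) : mk2 (a:ℚ) b ((0:ℤ):ℚ) e h ∈ H := by
  have hn : 0 < a * e := by simpa using hpos
  have ha : a ≠ 0 := by rintro rfl; simp at hn
  have he : e ≠ 0 := by rintro rfl; simp at hn
  have hne : a * e ≠ 0 := hn.ne'
  have hu' : InZS S (((a * e : ℤ) : ℚ))⁻¹ := by simpa using hu
  have ha' : InZS S ((a:ℚ))⁻¹ := InZS_inv_of_dvd hS ⟨e, rfl⟩ hne hu'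
  have he' : InZS S ((e:ℚ))⁻¹ := InZS_inv_of_dvd hS (Dvd.intro_left a rfl) hne hu'
  have haQ : (a:ℚ) ≠ 0 := Int.cast_ne_zero.mpr ha
  have hdQ : (a:ℚ) * e - 0 * 0 ≠ 0 := by
    push_cast
    simpa using (by exact_mod_cast hne : (a:ℚ) * e ≠ 0)
  have hD : mk2 (a:ℚ) 0 0 e hdQ ∈ H := by
    apply diag_mem hS
    · exact InZS_intCast hS a
    · exact ha'
    · exact InZS_intCast hS e
    · exact he'
    · exact_mod_cast hn
  have hU : mk2 1 ((b:ℚ) * ((a:ℚ))⁻¹) 0 1 (by norm_num) ∈ H :=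
    unitri_mem hS _ (InZS_mul hS (InZS_intCast hS b) ha') _
  have key : mk2 (a:ℚ) 0 0 e hdQ * mk2 1 ((b:ℚ) * ((a:ℚ))⁻¹) 0 1 (by norm_num) =
      mk2 (a:ℚ) b ((0:ℤ):ℚ) e h := by
    apply Units.ext
    rw [Units.val_mul, mk2_coe, mk2_coe, mk2_coe]
    apply fin2_ext <;>
      simp [Matrix.mul_apply, Fin.sum_univ_two] <;>
      field_simp
  exact key ▸ mul_mem hD hU

include hS in
lemma red : ∀ N : ℕ, ∀ a b c e : ℤ, c.natAbs ≤ N →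
    0 < a * e - b * c → InZS S (((a * e - b * c : ℤ) : ℚ))⁻¹ →
    ∀ (h : (a:ℚ) * e - (b:ℚ) * (c:ℚ) ≠ 0), mk2 (a:ℚ) b c e h ∈ H := by
  intro N
  induction N with
  | zero =>
    intro a b c e hc hpos hu h
    have hc0 : c = 0 := by
      have := Nat.le_zero.mp hc
      omega
    subst hc0
    exact red0 hS a b e hpos hu h
  | succ N ih =>
    intro a b c e hc hpos hu h
    by_cases hc0 : c = 0
    · subst hc0
      exact red0 hS a b e hpos hu h
    · set q : ℤ := a / c with hq
      have hAdet : (0:ℚ) * ((-q : ℤ):ℚ) - ((-1 : ℤ):ℚ) * ((1:ℤ):ℚ) ≠ 0 := by push_cast; norm_num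
      have hA : mk2 ((0:ℤ):ℚ) ((-1 : ℤ):ℚ) ((1:ℤ):ℚ) ((-q : ℤ):ℚ) hAdet ∈ H :=
        sl_mem 0 (-1) 1 (-q) (by ring) hAdet
      have hdeq : (-c) * (b - q * e) - (-e) * (a - c * q) = a * e - b * c := by ring
      have hMdet : ((-c : ℤ):ℚ) * ((b - q * e : ℤ):ℚ) - ((-e : ℤ):ℚ) * ((a - c * q : ℤ):ℚ) ≠ 0 := by
        have : ((-c) * (b - q * e) - (-e) * (a - c * q) : ℤ) ≠ 0 := by
          rw [hdeq]; exact_mod_cast (by exact_mod_cast hpos : (0:ℤ) < a * e - b * c).ne'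
        push_cast
        exact_mod_cast this
      have hcnat : (a - c * q).natAbs ≤ N := by
        have h1 : (a % c).natAbs < c.natAbs := Int.natAbs_emod_lt' a hc0
        have h2 : a % c = a - c * q := Int.emod_def a c
        rw [← h2]
        omega
      have hposM : 0 < (-c) * (b - q * e) - (-e) * (a - c * q) := by rw [hdeq]; exact hpos
      have huM : InZS S ((((-c) * (b - q * e) - (-e) * (a - c * q) : ℤ) : ℚ))⁻¹ := by
        rw [hdeq]; exact hu
      have hM : mk2 ((-c : ℤ):ℚ) ((-e : ℤ):ℚ) ((a - c * q : ℤ):ℚ) ((b - q * e : ℤ):ℚ) hMdet ∈ H :=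
        ih (-c) (-e) (a - c*q) (b - q*e) hcnat hposM huM hMdet
      have key : mk2 ((0:ℤ):ℚ) ((-1 : ℤ):ℚ) ((1:ℤ):ℚ) ((-q : ℤ):ℚ) hAdet * mk2 (a:ℚ) b c e h =
          mk2 ((-c : ℤ):ℚ) ((-e : ℤ):ℚ) ((a - c * q : ℤ):ℚ) ((b - q * e : ℤ):ℚ) hMdet := by
        apply Units.ext
        rw [Units.val_mul, mk2_coe, mk2_coe, mk2_coe]
        apply fin2_ext <;>
          simp [Matrix.mul_apply, Fin.sum_univ_two] <;>
          push_cast <;>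
          ring
      have : mk2 (a:ℚ) b c e h =
          (mk2 ((0:ℤ):ℚ) ((-1 : ℤ):ℚ) ((1:ℤ):ℚ) ((-q : ℤ):ℚ) hAdet)⁻¹ *
          mk2 ((-c : ℤ):ℚ) ((-e : ℤ):ℚ) ((a - c * q : ℤ):ℚ) ((b - q * e : ℤ):ℚ) hMdet := by
        rw [← key, inv_mul_cancel_left]
      rw [this]
      exact mul_mem (inv_mem hA) hM

end gen

lemma int_of_den_dvd (d : ℕ) (q : ℚ) (h : q.den ∣ d) : ∃ m : ℤ, (d:ℚ) * q = m := by
  obtain ⟨k, hk⟩ := h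
  refine ⟨k * q.num, ?_⟩
  subst hk
  push_cast
  rw [mul_comm (q.den : ℚ) (k : ℚ), mul_assoc, Rat.den_mul_eq_num]

/-- For a set `S` of primes, the group `G_S = GL₂⁺(ℤ_S)` is generated by its
subgroup `T_S` of diagonal matrices together with `SL₂(ℤ)`: the subgroup of `GL₂(ℚ)` generated
by `T_S ∪ SL₂(ℤ)` equals `G_S`. -/
theorem stmt3 (S : Set ℕ) (hS : ∀ p ∈ S, Nat.Prime p) :
    (Subgroup.closure (TSset S ∪ SL2Zset) : Set (GL (Fin 2) ℚ)) = GSset S := by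
  apply Set.Subset.antisymm
  · -- easy direction
    let G : Subgroup (GL (Fin 2) ℚ) :=
      { carrier := GSset S
        one_mem' := GS_one hS
        mul_mem' := fun ha hb => GS_mul hS ha hb
        inv_mem' := fun ha => GS_inv hS ha }
    have hle : Subgroup.closure (TSset S ∪ SL2Zset) ≤ G := by
      apply (Subgroup.closure_le _).mpr
      apply Set.union_subset
      · exact fun x hx => hx.1
      · rintro x ⟨hx1, hx2⟩
        refine ⟨?_, ?_, ?_, ?_⟩
        · intro i j p hp hpd
          rw [hx1 i j] at hpd
          exact (hS p hp).one_lt.ne' (Nat.dvd_one.mp hpd)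
        · rw [hx2]; norm_num
        · rw [hx2]; exact InZS_one hS
        · rw [hx2, inv_one]; exact InZS_one hS
    exact hle
  · -- hard direction
    rintro γ ⟨h1, h2, h3, h4⟩
    set A : M2 := (γ : M2) with hA
    set d : ℕ := (A 0 0).den * (A 0 1).den * ((A 1 0).den * (A 1 1).den) with hdd
    have hd0 : 0 < d := by positivity
    have hdS : ∀ p ∈ S, ¬ (p ∣ d) := by
      intro p hp hpd
      have hprime := (hS p hp)
      rcases (Nat.Prime.dvd_mul hprime).mp hpd with h' | h'
      · rcases (Nat.Prime.dvd_mul hprime).mp h' with h'' | h''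
        · exact h1 0 0 p hp h''
        · exact h1 0 1 p hp h''
      · rcases (Nat.Prime.dvd_mul hprime).mp h' with h'' | h''
        · exact h1 1 0 p hp h''
        · exact h1 1 1 p hp h''
    obtain ⟨a, ea⟩ := int_of_den_dvd d (A 0 0)
      ⟨(A 0 1).den * ((A 1 0).den * (A 1 1).den), by rw [hdd]; ring⟩
    obtain ⟨b, eb⟩ := int_of_den_dvd d (A 0 1)
      ⟨(A 0 0).den * ((A 1 0).den * (A 1 1).den), by rw [hdd]; ring⟩
    obtain ⟨c, ec⟩ := int_of_den_dvd d (A 1 0)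
      ⟨(A 0 0).den * ((A 0 1).den * (A 1 1).den), by rw [hdd]; ring⟩
    obtain ⟨e, ee⟩ := int_of_den_dvd d (A 1 1)
      ⟨(A 0 0).den * ((A 0 1).den * (A 1 0).den), by rw [hdd]; ring⟩
    have hdet2 : A.det = A 0 0 * A 1 1 - A 0 1 * A 1 0 := Matrix.det_fin_two A
    have hcast : ((a * e - b * c : ℤ) : ℚ) = (d:ℚ)^2 * A.det := by
      push_cast
      rw [← ea, ← eb, ← ec, ← ee, hdet2]
      ring
    have hnpos : 0 < a * e - b * c := by
      have : (0:ℚ) < ((a * e - b * c : ℤ) : ℚ) := by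
        rw [hcast]
        have : (0:ℚ) < (d:ℚ)^2 := by positivity
        exact mul_pos this h2
      exact_mod_cast this
    have hdQ : InZS S ((d:ℚ))⁻¹ := by
      intro p hp hpd
      rw [Rat.inv_natCast_den, if_neg hd0.ne'] at hpd
      exact hdS p hp hpd
    have hnu : InZS S (((a * e - b * c : ℤ) : ℚ))⁻¹ := by
      rw [hcast, sq, mul_inv, mul_inv]
      exact InZS_mul hS (InZS_mul hS hdQ hdQ) h4
    have hMdet : (a:ℚ) * e - (b:ℚ) * c ≠ 0 := by
      have : ((a * e - b * c : ℤ) : ℚ) ≠ 0 := by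
        exact_mod_cast hnpos.ne'
      push_cast at this
      exact this
    have hM : mk2 (a:ℚ) b c e hMdet ∈ Subgroup.closure (TSset S ∪ SL2Zset) :=
      red hS c.natAbs a b c e le_rfl hnpos hnu hMdet
    have hdQ0 : ((d:ℚ)) ≠ 0 := by positivity
    have hDdet : ((d:ℚ))⁻¹ * ((d:ℚ))⁻¹ - 0 * 0 ≠ 0 := by
      simpa using (by positivity : (0:ℚ) < (d:ℚ)⁻¹ * (d:ℚ)⁻¹).ne'
    have hD : mk2 ((d:ℚ))⁻¹ 0 0 ((d:ℚ))⁻¹ hDdet ∈ Subgroup.closure (TSset S ∪ SL2Zset) := by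
      apply diag_mem hS
      · exact hdQ
      · rw [inv_inv]; exact InZS_natCast hS d
      · exact hdQ
      · rw [inv_inv]; exact InZS_natCast hS d
      · positivity
    have key : γ = mk2 ((d:ℚ))⁻¹ 0 0 ((d:ℚ))⁻¹ hDdet * mk2 (a:ℚ) b c e hMdet := by
      apply Units.ext
      rw [Units.val_mul, mk2_coe, mk2_coe]
      refine fin2_ext ?_ ?_ ?_ ?_ <;>
        simp only [Matrix.mul_apply, Fin.sum_univ_two] <;>
        simp <;>
        rw [← hA] <;>
        first
          | (rw [← ea]; field_simp)
          | (rw [← eb]; field_simp)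
          | (rw [← ec]; field_simp)
          | (rw [← ee]; field_simp)
    rw [key]
    exact mul_mem hD hM
end

section
/- Let γ = [[a,b],[c,d]] be a 2×2 matrix over ℚ with D := ad − bc, and let α, β, x, y ∈ ℚ with α ≠ 0, β ≠ 0 and (aβ)y − (cβ)x = 1. Then γ factors as the matrix product γ = [[aβ, x],[cβ, y]] · [[(αβ)⁻¹, 0],[0, Dβ]] · [[1, αβ(by − xd)],[0, 1]] · [[α, 0],[0, 1]]. (In the paper's application, β is chosen so that aβ and cβ are coprime integers, x, y ∈ ℤ, and α is chosen so that the unipotent entry is an integer; the first factor then lies in SL₂(ℤ).) -/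
/-- Let `γ = [[a,b],[c,d]]` over `ℚ` with `D = ad − bc`, and let
`α, β, x, y ∈ ℚ` with `α ≠ 0`, `β ≠ 0` and `(aβ)y − (cβ)x = 1`.  Then
`γ = [[aβ, x],[cβ, y]] · [[(αβ)⁻¹, 0],[0, Dβ]] · [[1, αβ(by − xd)],[0, 1]] · [[α, 0],[0, 1]]`. -/
theorem stmt4 (a b c d α β x y : ℚ) (hα : α ≠ 0) (hβ : β ≠ 0)
    (hdet : (a * β) * y - (c * β) * x = 1) :
    (!![a, b; c, d] : Matrix (Fin 2) (Fin 2) ℚ) =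
      !![a * β, x; c * β, y] *
        !![(α * β)⁻¹, 0; 0, (a * d - b * c) * β] *
        !![1, α * β * (b * y - x * d); 0, 1] *
        !![α, 0; 0, 1] := by
  ext i j
  fin_cases i <;> fin_cases j <;>
    simp [Matrix.mul_apply, Fin.sum_univ_two] <;> field_simp <;> ring_nf
  · linear_combination (-b) * hdet
  · linear_combination (-d) * hdet
end

section
/- For every integer r ≥ 0, every integer m ≥ 1 and every x ∈ ℚ, the periodified Bernoulli functions satisfy the distribution relation Σ_{i=0}^{m−1} 𝔹_r((x+i)/m) = m^{1−r} · 𝔹_r(x). -/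
/-- The `r`-th periodified Bernoulli function `𝔹_r : ℚ → ℚ`: `𝔹_r(x) = B_r(x − ⌊x⌋)` where
`B_r` is the `r`-th Bernoulli polynomial, except `𝔹₁(x) = 0` for `x ∈ ℤ`. -/
noncomputable def perBernoulli (r : ℕ) (x : ℚ) : ℚ :=
  if r = 1 ∧ x.den = 1 then 0 else (Polynomial.bernoulli r).eval (Int.fract x)

open Polynomial Finset

namespace RaabeAux

variable (m : ℕ)

noncomputable def P (r : ℕ) : ℚ[X] :=
  ∑ i ∈ range m, (Polynomial.bernoulli r).comp (C (m:ℚ)⁻¹ * (X + C (i:ℚ)))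

noncomputable def G (r : ℕ) : ℚ[X] :=
  C ((m:ℚ)^r) * P m r - C (m:ℚ) * Polynomial.bernoulli r

lemma eval_P (r : ℕ) (x : ℚ) :
    (P m r).eval x = ∑ i ∈ range m, (Polynomial.bernoulli r).eval ((x + i)/m) := by
  simp [P, eval_finset_sum, eval_comp, div_eq_inv_mul, mul_add, mul_comm]

lemma eval_G_shift (hm : 1 ≤ m) (r : ℕ) (x : ℚ) :
    (G m r).eval (x + 1) = (G m r).eval x := by
  have hm0 : (m:ℚ) ≠ 0 := by positivity
  set f : ℕ → ℚ := fun j => (Polynomial.bernoulli r).eval ((x + j)/m) with hf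
  have key := (Finset.sum_range_succ' f m).symm.trans (Finset.sum_range_succ f m)
  have h1 : (P m r).eval (x + 1) = (P m r).eval x
      + ((Polynomial.bernoulli r).eval ((x + m)/m) - (Polynomial.bernoulli r).eval (x/m)) := by
    rw [eval_P, eval_P]
    have h0 : ∑ i ∈ range m, (Polynomial.bernoulli r).eval ((x + 1 + i)/m)
        = ∑ i ∈ range m, f (i + 1) := by
      refine Finset.sum_congr rfl fun i _ => ?_
      simp only [hf]
      push_cast
      ring_nf
    rw [h0]
    simp only [hf, Nat.cast_zero, add_zero] at key ⊢
    push_cast at key ⊢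
    linarith
  have h2 : (x + m)/m = 1 + x/m := by field_simp; ring
  have h3 : (Polynomial.bernoulli r).eval ((x + m)/m) - (Polynomial.bernoulli r).eval (x/m)
      = r * (x/m)^(r-1) := by
    rw [h2, Polynomial.bernoulli_eval_one_add]; ring
  have h4 : (Polynomial.bernoulli r).eval (x + 1) = (Polynomial.bernoulli r).eval x
      + r * x^(r-1) := by
    rw [add_comm, Polynomial.bernoulli_eval_one_add]
  have h5 : (m:ℚ)^r * (r * (x/m)^(r-1)) = (m:ℚ) * (r * x^(r-1)) := by
    cases r with
    | zero => simp
    | succ n =>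
      simp only [Nat.add_sub_cancel, div_pow, pow_succ]
      field_simp
  simp only [G, eval_sub, eval_mul, eval_C, h1, h3, h4]
  rw [mul_add, mul_add, h5]
  ring

lemma G_const (hm : 1 ≤ m) (r : ℕ) : G m r = C ((G m r).eval 0) := by
  set H : ℚ[X] := G m r - C ((G m r).eval 0) with hH
  have hnat : ∀ n : ℕ, H.IsRoot (n:ℚ) := by
    intro n
    induction n with
    | zero => simp [hH]
    | succ n ih =>
      have := eval_G_shift m hm r (n:ℚ)
      simp only [IsRoot, hH, eval_sub, eval_C] at ih ⊢
      push_cast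
      rw [this]
      linarith
  have : H = 0 := by
    apply Polynomial.eq_zero_of_infinite_isRoot
    exact Set.infinite_of_injective_forall_mem Nat.cast_injective hnat
  exact sub_eq_zero.mp this

lemma deriv_G (hm : 1 ≤ m) (r : ℕ) :
    Polynomial.derivative (G m (r + 1)) = C ((r:ℚ) + 1) * G m r := by
  have hm0 : (m:ℚ) ≠ 0 := by positivity
  have hP : Polynomial.derivative (P m (r+1)) = C ((m:ℚ)⁻¹ * ((r:ℚ)+1)) * P m r := by
    simp only [P, derivative_sum, Finset.mul_sum]
    refine Finset.sum_congr rfl fun i _ => ?_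
    rw [Polynomial.derivative_comp, Polynomial.derivative_bernoulli_add_one]
    simp [mul_comp, natCast_comp]
    ring
  simp only [G, derivative_sub, derivative_mul, derivative_C, zero_mul, zero_add, hP,
    Polynomial.derivative_bernoulli_add_one]
  have hstep : C ((m:ℚ)^(r+1)) * (C ((m:ℚ)⁻¹ * ((r:ℚ)+1)) * P m r) =
      C ((r:ℚ)+1) * (C ((m:ℚ)^r) * P m r) := by
    have hq : (m:ℚ)^(r+1) * ((m:ℚ)⁻¹ * ((r:ℚ)+1)) = ((r:ℚ)+1) * ((m:ℚ)^r) := by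
      field_simp
      ring
    rw [← mul_assoc, ← C_mul, hq, C_mul, mul_assoc]
  rw [hstep]
  have hC : (C ((r:ℚ)+1) : ℚ[X]) = (r : ℚ[X]) + 1 := by
    rw [map_add, map_one, C_eq_natCast]
  rw [hC]
  ring

lemma G_zero (hm : 1 ≤ m) (r : ℕ) : G m r = 0 := by
  have h := G_const m hm (r+1)
  have h2 : Polynomial.derivative (G m (r+1)) = 0 := by rw [h]; simp
  rw [deriv_G m hm r] at h2
  have : ((r:ℚ) + 1) ≠ 0 := by positivity
  have := mul_eq_zero.mp h2
  rcases this with h3 | h3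
  · exact absurd (C_eq_zero.mp h3) ‹((r:ℚ)+1) ≠ 0›
  · exact h3

lemma raabe (hm : 1 ≤ m) (r : ℕ) (x : ℚ) :
    ∑ i ∈ range m, (Polynomial.bernoulli r).eval ((x + i)/m)
      = (m:ℚ) ^ ((1:ℤ) - (r:ℤ)) * (Polynomial.bernoulli r).eval x := by
  have hm0 : (m:ℚ) ≠ 0 := by positivity
  have h := G_zero m hm r
  have h2 := congrArg (Polynomial.eval x) h
  simp only [G, eval_sub, eval_mul, eval_C, eval_zero, sub_eq_zero, eval_P] at h2
  have hz : (m:ℚ) ^ ((1:ℤ) - (r:ℤ)) = (m:ℚ) / (m:ℚ)^r := by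
    rw [zpow_sub₀ hm0, zpow_one, zpow_natCast]
  rw [hz]
  field_simp
  linarith [h2]


lemma fract_div (m : ℕ) (hm : 1 ≤ m) (x : ℚ) (i : ℕ) :
    Int.fract ((x + i)/m)
      = (Int.fract x + (((⌊x⌋ + i) % m).toNat : ℚ))/m := by
  have hmZ : (0:ℤ) < m := by exact_mod_cast hm
  have hmQ : (0:ℚ) < m := by exact_mod_cast hm
  set k : ℤ := ⌊x⌋
  set s : ℤ := (k + i) % m with hs
  have hs0 : 0 ≤ s := Int.emod_nonneg _ (by omega)
  have hsm : s < m := Int.emod_lt_of_pos _ hmZ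
  set q : ℤ := (k + i) / m with hq
  have hdecomp : (m:ℤ) * q + s = k + i := Int.mul_ediv_add_emod _ _
  have hx : x = Int.fract x + k := by rw [add_comm]; exact (Int.floor_add_fract x).symm
  have harg : (x + i)/m = (Int.fract x + (s:ℚ))/m + (q:ℚ) := by
    rw [hx]
    have : ((m:ℤ):ℚ) * q + s = (k:ℚ) + i := by exact_mod_cast congrArg (Int.cast : ℤ → ℚ) hdecomp
    rw [Int.fract_add_intCast, Int.fract_fract]
    field_simp
    push_cast at this ⊢
    linarith
  rw [harg, Int.fract_add_intCast]
  rw [Int.fract_eq_self.mpr]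
  · have hcast : ((s.toNat : ℕ) : ℚ) = (s:ℚ) := by exact_mod_cast Int.toNat_of_nonneg hs0
    rw [hcast]
  constructor
  · apply div_nonneg _ (le_of_lt hmQ)
    have := Int.fract_nonneg x
    have : (0:ℚ) ≤ s := by exact_mod_cast hs0
    positivity
  · rw [div_lt_one hmQ]
    have h1 : Int.fract x < 1 := Int.fract_lt_one x
    have h2 : (s:ℚ) ≤ (m:ℚ) - 1 := by
      have : s ≤ (m:ℤ) - 1 := by omega
      exact_mod_cast this
    linarith

lemma sum_fract (m : ℕ) (hm : 1 ≤ m) (r : ℕ) (x : ℚ) :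
    ∑ i ∈ range m, (Polynomial.bernoulli r).eval (Int.fract ((x + i)/m))
      = ∑ j ∈ range m, (Polynomial.bernoulli r).eval ((Int.fract x + j)/m) := by
  have hmZ : (0:ℤ) < m := by exact_mod_cast hm
  set k : ℤ := ⌊x⌋
  calc ∑ i ∈ range m, (Polynomial.bernoulli r).eval (Int.fract ((x + i)/m))
      = ∑ i ∈ range m,
          (Polynomial.bernoulli r).eval ((Int.fract x + (((k + i) % m).toNat : ℚ))/m) := by
        exact Finset.sum_congr rfl fun i _ => by rw [fract_div m hm x i]
    _ = ∑ j ∈ range m, (Polynomial.bernoulli r).eval ((Int.fract x + j)/m) := by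
        refine Finset.sum_nbij' (fun i => ((k + i) % m).toNat)
          (fun j => (((j:ℤ) - k) % m).toNat) ?_ ?_ ?_ ?_ ?_
        · intro i hi
          have h1 : 0 ≤ (k + i) % m := Int.emod_nonneg _ (by omega)
          have h2 : (k + i) % m < m := Int.emod_lt_of_pos _ hmZ
          simp only [mem_range] at *
          omega
        · intro j hj
          have h1 : 0 ≤ ((j:ℤ) - k) % m := Int.emod_nonneg _ (by omega)
          have h2 : ((j:ℤ) - k) % m < m := Int.emod_lt_of_pos _ hmZ
          simp only [mem_range] at *
          omega
        · intro i hi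
          simp only [mem_range] at hi
          have h1 : 0 ≤ (k + i) % m := Int.emod_nonneg _ (by omega)
          have key : (((k + i) % m : ℤ) - k) % m = (i:ℤ) := by
            rw [Int.sub_emod, Int.emod_emod_of_dvd _ dvd_rfl, ← Int.sub_emod]
            have : (k + i - k : ℤ) = i := by ring
            rw [this, Int.emod_eq_of_lt (by positivity) (by exact_mod_cast hi)]
          simp only [Int.toNat_of_nonneg h1, key]
          omega
        · intro j hj
          simp only [mem_range] at hj
          have h1 : 0 ≤ ((j:ℤ) - k) % m := Int.emod_nonneg _ (by omega)
          have key : (k + (((j:ℤ) - k) % m)) % m = (j:ℤ) := by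
            rw [Int.add_emod, Int.emod_emod_of_dvd _ dvd_rfl, ← Int.add_emod]
            have : (k + ((j:ℤ) - k) : ℤ) = j := by ring
            rw [this, Int.emod_eq_of_lt (by positivity) (by exact_mod_cast hj)]
          simp only [Int.toNat_of_nonneg h1, key]
          omega
        · intro i _
          rfl


lemma fract_of_den_one (z : ℚ) (hz : z.den = 1) : Int.fract z = 0 := by
  have : ((z.num : ℤ) : ℚ) = z := (Rat.den_eq_one_iff z).mp hz
  rw [← this, Int.fract_intCast]

lemma per_one (z : ℚ) : perBernoulli 1 z
    = (Polynomial.bernoulli 1).eval (Int.fract z) + (if z.den = 1 then (1/2:ℚ) else 0) := by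
  by_cases hz : z.den = 1
  · rw [perBernoulli, if_pos ⟨rfl, hz⟩, if_pos hz, fract_of_den_one z hz]
    simp [Polynomial.bernoulli_one]
  · rw [perBernoulli, if_neg (by tauto), if_neg hz, add_zero]

lemma den_div_imp (m : ℕ) (hm : 1 ≤ m) (x : ℚ) (i : ℕ)
    (h : ((x + i)/m).den = 1) : x.den = 1 := by
  have hm0 : (m:ℚ) ≠ 0 := by positivity
  set z := (x + i)/m with hzd
  have hz : ((z.num : ℤ) : ℚ) = z := (Rat.den_eq_one_iff z).mp h
  have hx : x = ((z.num * m - i : ℤ) : ℚ) := by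
    push_cast
    rw [hz, hzd]
    field_simp
    ring
  rw [hx, Rat.den_intCast]

lemma den_div_iff (m : ℕ) (hm : 1 ≤ m) (a : ℤ) (i : ℕ) :
    (((a:ℚ) + i)/m).den = 1 ↔ (m:ℤ) ∣ a + i := by
  have hm0 : (m:ℚ) ≠ 0 := by positivity
  constructor
  · intro h
    set z := ((a:ℚ) + i)/m with hzd
    have hz : ((z.num : ℤ) : ℚ) = z := (Rat.den_eq_one_iff z).mp h
    have : ((a + i : ℤ) : ℚ) = ((z.num * m : ℤ) : ℚ) := by
      push_cast
      rw [hz, hzd]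
      field_simp
    have := Int.cast_injective (α := ℚ) this
    exact ⟨z.num, by linarith [this]⟩
  · rintro ⟨c, hc⟩
    have : ((a:ℚ) + i)/m = ((c:ℤ):ℚ) := by
      have : ((a:ℚ) + i) = ((m * c : ℤ):ℚ) := by exact_mod_cast congrArg (Int.cast : ℤ → ℚ) hc
      rw [this]
      push_cast
      field_simp
    rw [this, Rat.den_intCast]

lemma ind_sum (m : ℕ) (hm : 1 ≤ m) (x : ℚ) :
    ∑ i ∈ range m, (if ((x + i)/m).den = 1 then (1/2:ℚ) else 0)
      = if x.den = 1 then (1/2:ℚ) else 0 := by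
  have hmZ : (0:ℤ) < m := by exact_mod_cast hm
  by_cases hx : x.den = 1
  · rw [if_pos hx]
    set a := x.num with ha
    have hxa : ((a : ℤ) : ℚ) = x := (Rat.den_eq_one_iff x).mp hx
    set i₀ : ℕ := ((-a) % m).toNat with hi₀
    have h1 : 0 ≤ (-a) % m := Int.emod_nonneg _ (by omega)
    have h2 : (-a) % m < m := Int.emod_lt_of_pos _ hmZ
    have hi₀m : i₀ ∈ range m := by simp only [mem_range]; omega
    have hcond : ∀ i ∈ range m, (((x + i)/m).den = 1 ↔ i = i₀) := by
      intro i hi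
      simp only [mem_range] at hi
      rw [← hxa, den_div_iff m hm a i]
      constructor
      · intro ⟨c, hc⟩
        have hdvd : (m:ℤ) ∣ (i:ℤ) - (-a) := ⟨c, by linarith⟩
        have key : (-a) % (m:ℤ) = (i : ℤ) % m := Int.modEq_iff_dvd.mpr hdvd
        have : (i:ℤ) % m = i := Int.emod_eq_of_lt (by positivity) (by exact_mod_cast hi)
        omega
      · rintro rfl
        have : (a + ((-a) % m)) % m = 0 := by
          rw [Int.add_emod, Int.emod_emod_of_dvd _ dvd_rfl, ← Int.add_emod]
          simp
        have hd := Int.dvd_of_emod_eq_zero this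
        have : ((i₀ : ℕ) : ℤ) = (-a) % m := by omega
        rw [this]
        exact hd
    calc ∑ i ∈ range m, (if ((x + i)/m).den = 1 then (1/2:ℚ) else 0)
        = ∑ i ∈ range m, (if i = i₀ then (1/2:ℚ) else 0) :=
          Finset.sum_congr rfl fun i hi => if_congr (hcond i hi) rfl rfl
      _ = 1/2 := by rw [Finset.sum_ite_eq' (range m) i₀ (fun _ => (1/2:ℚ)), if_pos hi₀m]
  · rw [if_neg hx]
    apply Finset.sum_eq_zero
    intro i _
    rw [if_neg]
    intro h
    exact hx (den_div_imp m hm x i h)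


end RaabeAux

open RaabeAux

/-- For every `r ≥ 0`, `m ≥ 1` and `x ∈ ℚ`, the periodified Bernoulli
functions satisfy the distribution relation
`Σ_{i=0}^{m−1} 𝔹_r((x+i)/m) = m^{1−r}·𝔹_r(x)`. -/
theorem stmt5 (r : ℕ) (m : ℕ) (hm : 1 ≤ m) (x : ℚ) :
    ∑ i ∈ Finset.range m, perBernoulli r ((x + (i : ℚ)) / (m : ℚ))
      = (m : ℚ) ^ ((1 : ℤ) - (r : ℤ)) * perBernoulli r x := by
  by_cases hr : r = 1
  · subst hr
    have hper : ∀ z : ℚ, perBernoulli 1 z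
        = (Polynomial.bernoulli 1).eval (Int.fract z) + (if z.den = 1 then (1/2:ℚ) else 0) := by
      intro z
      rw [per_one]
    simp only [hper]
    rw [Finset.sum_add_distrib, sum_fract m hm 1 x, raabe m hm 1 (Int.fract x), ind_sum m hm x]
    norm_num
  · have hper : ∀ z : ℚ, perBernoulli r z = (Polynomial.bernoulli r).eval (Int.fract z) := by
      intro z
      rw [perBernoulli, if_neg (by tauto)]
    simp only [hper]
    rw [sum_fract m hm r x, raabe m hm r (Int.fract x)]
end

section
/- Let n be a positive integer and (x₁,x₂) ∈ ℚ² with (x₁,x₂) ∉ ((1/n)ℤ)². Then for every τ in the complex upper half-plane ℍ, each of the infinite products defining the theta-units below converges absolutely, and ∏_{i=0}^{n−1} ∏_{j=0}^{n−1} u(x₁ + i/n, x₂ + j/n)(τ) = u(n·x₁, n·x₂)(τ). -/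
/-- The factors of the theta-unit coming from the positive `y ≡ a (mod ℤ)`:
`y ↦ 1 − e^{2πi(yτ+b)}`. -/
noncomputable def thetaUnitPos (a b : ℚ) (τ : ℂ) :
    {y : ℚ // (y - a).den = 1 ∧ 0 < y} → ℂ :=
  fun y => 1 - Complex.exp (2 * (Real.pi : ℂ) * Complex.I * ((y.1 : ℂ) * τ + (b : ℂ)))

/-- The factors of the theta-unit coming from the negative `y ≡ a (mod ℤ)`:
`y ↦ 1 − e^{2πi(−yτ−b)}`. -/
noncomputable def thetaUnitNeg (a b : ℚ) (τ : ℂ) :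
    {y : ℚ // (y - a).den = 1 ∧ y < 0} → ℂ :=
  fun y => 1 - Complex.exp (2 * (Real.pi : ℂ) * Complex.I * (-((y.1 : ℂ) * τ) - (b : ℂ)))

/-- The theta-unit
`u(a,b)(τ) = ∏_{y ∈ a+ℤ, y>0} (1 − e^{2πi(yτ+b)}) · ∏_{y ∈ a+ℤ, y<0} (1 − e^{2πi(−yτ−b)})`. -/
noncomputable def thetaUnit (a b : ℚ) (τ : ℂ) : ℂ :=
  (∏' y, thetaUnitPos a b τ y) * (∏' y, thetaUnitNeg a b τ y)

namespace Stmt8Aux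

open Complex Finset

noncomputable def e2 (w : ℂ) : ℂ := Complex.exp (2 * (Real.pi : ℂ) * Complex.I * w)

lemma e2_add (w z : ℂ) : e2 (w + z) = e2 w * e2 z := by
  rw [e2, e2, e2, mul_add, Complex.exp_add]

lemma e2_nat (k : ℕ) (w : ℂ) : e2 ((k : ℂ) * w) = e2 w ^ k := by
  rw [e2, e2, show 2 * (Real.pi : ℂ) * Complex.I * ((k : ℂ) * w)
      = (k : ℂ) * (2 * (Real.pi : ℂ) * Complex.I * w) by ring, Complex.exp_nat_mul]

lemma norm_e2 (r b : ℚ) (τ : ℂ) :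
    ‖e2 ((r : ℂ) * τ + (b : ℂ))‖ = Real.exp (-(2 * Real.pi * (r : ℝ) * τ.im)) := by
  rw [e2, Complex.norm_exp]
  congr 1
  have : ((r : ℂ) * τ + (b : ℂ)) = Complex.mk ((r:ℝ) * τ.re + (b:ℝ)) ((r:ℝ) * τ.im) := by
    apply Complex.ext <;> simp [Complex.mul_re, Complex.mul_im]
  rw [this]
  simp [Complex.mul_re, Complex.mul_im, Complex.I_re, Complex.I_im]
  ring

lemma norm_e2_lt_one {r : ℚ} (b : ℚ) {τ : ℂ} (hr : 0 < r) (hτ : 0 < τ.im) :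
    ‖e2 ((r : ℂ) * τ + (b : ℂ))‖ < 1 := by
  rw [norm_e2, Real.exp_lt_one_iff]
  have h0 : (0:ℝ) < (r:ℝ) := by exact_mod_cast hr
  have := mul_pos (mul_pos (mul_pos two_pos Real.pi_pos) h0) hτ
  linarith

lemma multipliable_one_sub {f : ℕ → ℂ} (hf : Summable f) (h1 : ∀ k, ‖f k‖ < 1) :
    Multipliable fun k => 1 - f k := by
  have := multipliable_one_add_of_summable (f := fun k => -f k) (by simpa using hf.norm)
  simpa [sub_eq_add_neg] using this

lemma den_one_iff (q : ℚ) : q.den = 1 ↔ ∃ m : ℤ, q = (m : ℚ) := by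
  constructor
  · intro h
    exact ⟨q.num, ((Rat.den_eq_one_iff q).mp h).symm⟩
  · rintro ⟨m, rfl⟩
    exact Rat.den_intCast m

/-- Enumeration of the positive rationals congruent to `a` mod `ℤ`. -/
noncomputable def posEquiv (a : ℚ) : ℕ ≃ {y : ℚ // (y - a).den = 1 ∧ 0 < y} where
  toFun k := ⟨a + 1 - ⌈a⌉ + k, by
    constructor
    · rw [den_one_iff]
      exact ⟨1 - ⌈a⌉ + k, by push_cast; ring⟩
    · have := Int.ceil_lt_add_one a
      have : (0:ℚ) ≤ (k:ℚ) := by positivity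
      linarith [Int.ceil_lt_add_one a]⟩
  invFun y := (⌈y.1⌉ - 1).toNat
  left_inv k := by
    have : a + 1 - ⌈a⌉ + k = a + ((1 - ⌈a⌉ + k : ℤ) : ℚ) := by push_cast; ring
    simp only [this, Int.ceil_add_intCast]
    omega
  right_inv := by
    rintro ⟨y, h1, h2⟩
    obtain ⟨m, hm⟩ := (den_one_iff _).mp h1
    have hy : y = a + m := by linarith [hm]
    have hceil : ⌈y⌉ = ⌈a⌉ + m := by rw [hy, Int.ceil_add_intCast]
    have hge : 1 ≤ ⌈y⌉ := Int.ceil_pos.mpr h2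
    apply Subtype.ext
    simp only [hceil]
    have htn : (((⌈a⌉ + m - 1).toNat : ℤ) : ℚ) = ((⌈a⌉ + m - 1 : ℤ) : ℚ) := by
      congr 1
      omega
    push_cast at htn ⊢
    rw [htn]
    linarith [hy]

lemma neg_mem {a y : ℚ} (h : (y - -a).den = 1 ∧ 0 < y) : (-y - a).den = 1 ∧ -y < 0 := by
  refine ⟨?_, by linarith [h.2]⟩
  rw [show -y - a = -(y - -a) by ring, Rat.den_neg_eq_den]
  exact h.1

lemma neg_mem' {a y : ℚ} (h : (y - a).den = 1 ∧ y < 0) : (-y - -a).den = 1 ∧ 0 < -y := by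
  refine ⟨?_, by linarith [h.2]⟩
  rw [show -y - -a = -(y - a) by ring, Rat.den_neg_eq_den]
  exact h.1

/-- Enumeration of the negative rationals congruent to `a` mod `ℤ`. -/
noncomputable def negEquiv (a : ℚ) : ℕ ≃ {y : ℚ // (y - a).den = 1 ∧ y < 0} :=
  (posEquiv (-a)).trans
    { toFun := fun y => ⟨-y.1, neg_mem y.2⟩
      invFun := fun y => ⟨-y.1, neg_mem' y.2⟩
      left_inv := by rintro ⟨y, h⟩; simp
      right_inv := by rintro ⟨y, h⟩; simp }

lemma mult_aux2 {r₀ : ℚ} (b : ℚ) (h0 : 0 < r₀) {τ : ℂ} (hτ : 0 < τ.im) :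
    Multipliable (fun k : ℕ => 1 - e2 (((r₀ + k : ℚ) : ℂ) * τ + (b : ℂ))) := by
  have hrw : ∀ k : ℕ, e2 (((r₀ + k : ℚ) : ℂ) * τ + (b : ℂ))
      = e2 ((r₀ : ℂ) * τ + (b : ℂ)) * e2 τ ^ k := by
    intro k
    push_cast
    rw [show ((r₀ : ℂ) + (k : ℂ)) * τ + (b : ℂ)
        = ((r₀ : ℂ) * τ + (b : ℂ)) + (k : ℂ) * τ by ring, e2_add, e2_nat]
  apply multipliable_one_sub
  · apply Summable.congr (f := fun k : ℕ => e2 ((r₀ : ℂ) * τ + (b : ℂ)) * e2 τ ^ k)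
    · apply Summable.mul_left
      apply summable_geometric_of_norm_lt_one
      have : ‖e2 (((1:ℚ) : ℂ) * τ + ((0:ℚ) : ℂ))‖ < 1 := norm_e2_lt_one 0 one_pos hτ
      simpa using this
    · exact fun k => (hrw k).symm
  · intro k
    exact norm_e2_lt_one b (by positivity) hτ

lemma mult_pos (a b : ℚ) (τ : ℂ) (hτ : 0 < τ.im) : Multipliable (thetaUnitPos a b τ) := by
  apply (Equiv.multipliable_iff (posEquiv a)).mp
  have h0 : (0:ℚ) < a + 1 - ⌈a⌉ := by linarith [Int.ceil_lt_add_one a]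
  refine Multipliable.congr (mult_aux2 b h0 hτ) fun k => ?_
  simp only [Function.comp_apply, thetaUnitPos, posEquiv, Equiv.coe_fn_mk, e2]

lemma mult_neg (a b : ℚ) (τ : ℂ) (hτ : 0 < τ.im) : Multipliable (thetaUnitNeg a b τ) := by
  apply (Equiv.multipliable_iff (negEquiv a)).mp
  have h0 : (0:ℚ) < -a + 1 - ⌈-a⌉ := by linarith [Int.ceil_lt_add_one (-a)]
  refine Multipliable.congr (mult_aux2 (-b) h0 hτ) fun k => ?_
  simp only [Function.comp_apply, thetaUnitNeg, negEquiv, posEquiv, Equiv.trans_apply,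
    Equiv.coe_fn_mk, e2]
  congr 2
  push_cast
  ring

lemma prod_one_sub_primroot {n : ℕ} (hn : 0 < n) {ζ : ℂ} (hζ : IsPrimitiveRoot ζ n) (w : ℂ) :
    ∏ j ∈ Finset.range n, (1 - w * ζ ^ j) = 1 - w ^ n := by
  have himg : (Finset.range n).image (ζ ^ ·) = Polynomial.nthRootsFinset n (1:ℂ) := by
    apply Finset.eq_of_subset_of_card_le
    · intro μ hμ
      simp only [Finset.mem_image, Finset.mem_range] at hμ
      obtain ⟨j, hj, rfl⟩ := hμ
      rw [Polynomial.mem_nthRootsFinset hn (1:ℂ), ← pow_mul, mul_comm, pow_mul, hζ.pow_eq_one,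
        one_pow]
    · rw [hζ.card_nthRootsFinset, Finset.card_image_of_injOn
        (fun i hi j hj => hζ.pow_inj (Finset.mem_range.mp hi) (Finset.mem_range.mp hj)),
        Finset.card_range]
  have key : ∀ v : ℂ, ∏ j ∈ Finset.range n, (v - ζ ^ j) = v ^ n - 1 := by
    intro v
    have := congrArg (Polynomial.eval v) (Polynomial.X_pow_sub_one_eq_prod hn hζ)
    simp only [Polynomial.eval_sub, Polynomial.eval_pow, Polynomial.eval_X,
      Polynomial.eval_one, Polynomial.eval_prod, Polynomial.eval_C] at this
    rw [this, ← himg, Finset.prod_image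
      (fun i hi j hj => hζ.pow_inj (Finset.mem_range.mp hi) (Finset.mem_range.mp hj))]
  rcases eq_or_ne w 0 with rfl | hw
  · simp [zero_pow hn.ne']
  · calc ∏ j ∈ Finset.range n, (1 - w * ζ ^ j)
        = ∏ j ∈ Finset.range n, (w * (w⁻¹ - ζ ^ j)) := by
          apply Finset.prod_congr rfl
          intro j _
          field_simp
      _ = w ^ n * (w⁻¹ ^ n - 1) := by rw [Finset.prod_mul_distrib, Finset.prod_const,
            Finset.card_range, key]
      _ = 1 - w ^ n := by
          rw [mul_sub, ← mul_pow, mul_inv_cancel₀ hw, one_pow, mul_one]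

section SigmaEquiv

variable {n : ℕ} (x : ℚ) (P : ℚ → Prop)

lemma sig_to_den (hn : 0 < n) {i : Fin n} {y : ℚ} (hy : (y - (x + (i : ℕ) / (n : ℚ))).den = 1) :
    ((n : ℚ) * y - (n : ℚ) * x).den = 1 := by
  obtain ⟨m, hm⟩ := (den_one_iff _).mp hy
  rw [den_one_iff]
  refine ⟨(i : ℕ) + n * m, ?_⟩
  have hy' : y = x + (i : ℕ) / (n : ℚ) + m := by linarith [hm]
  have hne : ((n:ℚ)) ≠ 0 := by positivity
  rw [hy']
  push_cast
  field_simp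
  ring

/-- Scaling map: `(i, y) ↦ n y`. -/
noncomputable def sigmaFun (hn : 0 < n) (hP : ∀ y : ℚ, P y ↔ P ((n : ℚ) * y)) :
    (Σ i : Fin n, {y : ℚ // (y - (x + (i : ℕ) / (n : ℚ))).den = 1 ∧ P y}) →
      {z : ℚ // (z - (n : ℚ) * x).den = 1 ∧ P z} :=
  fun p => ⟨(n : ℚ) * p.2.1, sig_to_den x hn p.2.2.1, (hP _).mp p.2.2.2⟩

lemma sigmaFun_bij (hn : 0 < n) (hP : ∀ y : ℚ, P y ↔ P ((n : ℚ) * y)) :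
    Function.Bijective (sigmaFun x P hn hP) := by
  have hne : ((n:ℚ)) ≠ 0 := by positivity
  constructor
  · rintro ⟨i, y, hy1, hy2⟩ ⟨i', y', hy1', hy2'⟩ hfeq
    simp only [sigmaFun, Subtype.mk.injEq] at hfeq
    have hyy : y = y' := mul_left_cancel₀ hne hfeq
    subst hyy
    obtain ⟨m, hm⟩ := (den_one_iff _).mp hy1
    obtain ⟨m', hm'⟩ := (den_one_iff _).mp hy1'
    have h3 : ((i:ℕ):ℚ) / n + m = ((i':ℕ):ℚ) / n + m' := by linarith [hm, hm']
    have h4 : ((i:ℕ):ℚ) + m * n = ((i':ℕ):ℚ) + m' * n := by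
      field_simp at h3
      linarith [h3]
    have h5 : ((i:ℕ):ℤ) + m * n = ((i':ℕ):ℤ) + m' * n := by exact_mod_cast h4
    have hd : (n:ℤ) ∣ (((i:ℕ):ℤ) - ((i':ℕ):ℤ)) := ⟨m' - m, by linarith⟩
    have hi : (i:ℕ) < n := i.2
    have hi' : (i':ℕ) < n := i'.2
    have h0 : (((i:ℕ):ℤ) - ((i':ℕ):ℤ)) = 0 :=
      Int.eq_zero_of_dvd_of_natAbs_lt_natAbs hd (by omega)
    have : i = i' := Fin.ext (by omega)
    subst this
    rfl
  · rintro ⟨z, hz1, hz2⟩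
    set m : ℤ := (z - (n : ℚ) * x).num with hmdef
    have hm : z - (n : ℚ) * x = (m : ℚ) := ((Rat.den_eq_one_iff _).mp hz1).symm
    have hmod0 : 0 ≤ m % n := Int.emod_nonneg _ (by exact_mod_cast hn.ne')
    have hmodlt : m % n < n := Int.emod_lt_of_pos _ (by exact_mod_cast hn)
    have hkey : ((n:ℤ) * (m / n) + m % n : ℤ) = m := Int.mul_ediv_add_emod m n
    refine ⟨⟨⟨(m % n).toNat, by omega⟩, ⟨z / n, ?_, ?_⟩⟩, ?_⟩
    · rw [den_one_iff]
      refine ⟨m / n, ?_⟩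
      have hz' : z = (n : ℚ) * x + m := by linarith [hm]
      have hkeyQ : (n : ℚ) * ((m / (n:ℤ) : ℤ) : ℚ) + ((m % (n:ℤ) : ℤ) : ℚ) = (m : ℚ) := by
        exact_mod_cast congrArg (fun t : ℤ => (t : ℚ)) hkey
      have hmodQ : (((m % (n:ℤ)).toNat : ℕ) : ℚ) = ((m % (n:ℤ) : ℤ) : ℚ) := by
        exact_mod_cast congrArg (fun t : ℤ => (t : ℚ)) (Int.toNat_of_nonneg hmod0)
      simp only [hz']
      push_cast [Int.toNat_of_nonneg hmod0]
      field_simp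
      linarith [hkeyQ, hmodQ]
    · have : (n : ℚ) * (z / n) = z := by field_simp
      exact (hP _).mpr (by rw [this]; exact hz2)
    · apply Subtype.ext
      show (n : ℚ) * (z / n) = z
      field_simp

/-- Scaling equivalence. -/
noncomputable def sigmaEquiv (hn : 0 < n) (hP : ∀ y : ℚ, P y ↔ P ((n : ℚ) * y)) :
    (Σ i : Fin n, {y : ℚ // (y - (x + (i : ℕ) / (n : ℚ))).den = 1 ∧ P y}) ≃
      {z : ℚ // (z - (n : ℚ) * x).den = 1 ∧ P z} :=
  Equiv.ofBijective _ (sigmaFun_bij x P hn hP)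

lemma sigmaEquiv_coe (hn : 0 < n) (hP : ∀ y : ℚ, P y ↔ P ((n : ℚ) * y)) (p) :
    ((sigmaEquiv x P hn hP) p).1 = (n : ℚ) * p.2.1 := rfl

end SigmaEquiv

end Stmt8Aux

set_option maxHeartbeats 1000000 in
open Stmt8Aux Complex Finset in
/-- Let `n ≥ 1` and `(x₁,x₂) ∈ ℚ²` with `(x₁,x₂) ∉ ((1/n)ℤ)²` (i.e. not
both `n·x₁` and `n·x₂` are integers). Then for every `τ` in the upper half-plane the infinite
products defining the theta-units below converge, and
`∏_{i=0}^{n−1} ∏_{j=0}^{n−1} u(x₁+i/n, x₂+j/n)(τ) = u(n·x₁, n·x₂)(τ)`. -/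
theorem stmt8 (n : ℕ) (hn : 1 ≤ n) (x₁ x₂ : ℚ)
    (h : ¬(((n : ℚ) * x₁).den = 1 ∧ ((n : ℚ) * x₂).den = 1))
    (τ : ℂ) (hτ : 0 < τ.im) :
    (∀ i ∈ Finset.range n, ∀ j ∈ Finset.range n,
      Multipliable (thetaUnitPos (x₁ + (i : ℚ) / (n : ℚ)) (x₂ + (j : ℚ) / (n : ℚ)) τ) ∧
      Multipliable (thetaUnitNeg (x₁ + (i : ℚ) / (n : ℚ)) (x₂ + (j : ℚ) / (n : ℚ)) τ)) ∧
    Multipliable (thetaUnitPos ((n : ℚ) * x₁) ((n : ℚ) * x₂) τ) ∧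
    Multipliable (thetaUnitNeg ((n : ℚ) * x₁) ((n : ℚ) * x₂) τ) ∧
    ∏ i ∈ Finset.range n, ∏ j ∈ Finset.range n,
        thetaUnit (x₁ + (i : ℚ) / (n : ℚ)) (x₂ + (j : ℚ) / (n : ℚ)) τ
      = thetaUnit ((n : ℚ) * x₁) ((n : ℚ) * x₂) τ := by
  have hn0 : 0 < n := hn
  have hne : ((n:ℚ)) ≠ 0 := by positivity
  have hneC : ((n:ℂ)) ≠ 0 := by exact_mod_cast (Nat.cast_ne_zero (R := ℂ)).mpr hn0.ne'
  refine ⟨fun i _ j _ => ⟨mult_pos _ _ τ hτ, mult_neg _ _ τ hτ⟩,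
    mult_pos _ _ τ hτ, mult_neg _ _ τ hτ, ?_⟩
  set ζ : ℂ := Complex.exp (2 * (Real.pi:ℂ) * Complex.I / n) with hζdef
  have hζ : IsPrimitiveRoot ζ n := Complex.isPrimitiveRoot_exp n hn0.ne'
  -- pointwise product over the `j` index, positive side
  have key_pos : ∀ y : ℚ,
      ∏ j ∈ Finset.range n, (1 - e2 ((y:ℂ) * τ + ((x₂ + (j:ℚ)/(n:ℚ) : ℚ):ℂ)))
        = 1 - e2 (((((n:ℚ) * y : ℚ)):ℂ) * τ + ((((n:ℚ) * x₂ : ℚ)):ℂ)) := by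
    intro y
    have hterm : ∀ j ∈ Finset.range n,
        (1 - e2 ((y:ℂ) * τ + ((x₂ + (j:ℚ)/(n:ℚ) : ℚ):ℂ)))
          = 1 - e2 ((y:ℂ) * τ + (x₂:ℂ)) * ζ ^ j := by
      intro j _
      congr 1
      rw [show (y:ℂ) * τ + ((x₂ + (j:ℚ)/(n:ℚ) : ℚ):ℂ)
          = ((y:ℂ) * τ + (x₂:ℂ)) + (j:ℂ) * (1/(n:ℂ)) by push_cast; ring, e2_add, e2_nat]
      congr 2
      rw [e2, hζdef]
      congr 1
      field_simp
    rw [Finset.prod_congr rfl hterm, prod_one_sub_primroot hn0 hζ]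
    congr 1
    rw [← e2_nat]
    congr 1
    push_cast
    ring
  -- pointwise product over the `j` index, negative side
  have key_neg : ∀ y : ℚ,
      ∏ j ∈ Finset.range n, (1 - e2 (-((y:ℂ) * τ) - ((x₂ + (j:ℚ)/(n:ℚ) : ℚ):ℂ)))
        = 1 - e2 (-(((((n:ℚ) * y : ℚ)):ℂ) * τ) - ((((n:ℚ) * x₂ : ℚ)):ℂ)) := by
    intro y
    have hterm : ∀ j ∈ Finset.range n,
        (1 - e2 (-((y:ℂ) * τ) - ((x₂ + (j:ℚ)/(n:ℚ) : ℚ):ℂ)))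
          = 1 - e2 (-((y:ℂ) * τ) - (x₂:ℂ)) * (ζ⁻¹) ^ j := by
      intro j _
      congr 1
      rw [show -((y:ℂ) * τ) - ((x₂ + (j:ℚ)/(n:ℚ) : ℚ):ℂ)
          = (-((y:ℂ) * τ) - (x₂:ℂ)) + (j:ℂ) * (-(1/(n:ℂ))) by push_cast; ring, e2_add, e2_nat]
      congr 2
      rw [e2, hζdef, ← Complex.exp_neg]
      congr 1
      field_simp
    rw [Finset.prod_congr rfl hterm, prod_one_sub_primroot hn0 hζ.inv]
    congr 1
    rw [← e2_nat]
    congr 1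
    push_cast
    ring
  -- the two scaling equivalences
  have hPpos : ∀ y : ℚ, 0 < y ↔ 0 < (n : ℚ) * y := by
    intro y
    constructor
    · intro hy; positivity
    · intro hy
      by_contra hy'
      push_neg at hy'
      nlinarith [hn0, (by exact_mod_cast hn0 : (0:ℚ) < n)]
  have hPneg : ∀ y : ℚ, y < 0 ↔ (n : ℚ) * y < 0 := by
    intro y
    have h0 : (0:ℚ) < n := by exact_mod_cast hn0
    constructor
    · intro hy; exact mul_neg_of_pos_of_neg h0 hy
    · intro hy
      by_contra hy'
      push_neg at hy'
      nlinarith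
  set Epos := sigmaEquiv (n := n) x₁ (fun y => 0 < y) hn0 hPpos with hEposdef
  set Eneg := sigmaEquiv (n := n) x₁ (fun y => y < 0) hn0 hPneg with hEnegdef
  have hmultP : Multipliable (thetaUnitPos ((n:ℚ)*x₁) ((n:ℚ)*x₂) τ) := mult_pos _ _ τ hτ
  have hmultN : Multipliable (thetaUnitNeg ((n:ℚ)*x₁) ((n:ℚ)*x₂) τ) := mult_neg _ _ τ hτ
  have hmultSP : Multipliable (thetaUnitPos ((n:ℚ)*x₁) ((n:ℚ)*x₂) τ ∘ Epos) :=
    (Equiv.multipliable_iff Epos).mpr hmultP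
  have hmultSN : Multipliable (thetaUnitNeg ((n:ℚ)*x₁) ((n:ℚ)*x₂) τ ∘ Eneg) :=
    (Equiv.multipliable_iff Eneg).mpr hmultN
  -- pointwise identification, positive side
  have fact_pos : ∀ (i : Fin n) (y : {y : ℚ // (y - (x₁ + ((i:ℕ):ℚ)/(n:ℚ))).den = 1 ∧ 0 < y}),
      ∏ j ∈ Finset.range n,
          thetaUnitPos (x₁ + ((i:ℕ):ℚ)/(n:ℚ)) (x₂ + (j:ℚ)/(n:ℚ)) τ y
        = (thetaUnitPos ((n:ℚ)*x₁) ((n:ℚ)*x₂) τ ∘ Epos) ⟨i, y⟩ := by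
    intro i y
    calc ∏ j ∈ Finset.range n,
          thetaUnitPos (x₁ + ((i:ℕ):ℚ)/(n:ℚ)) (x₂ + (j:ℚ)/(n:ℚ)) τ y
        = ∏ j ∈ Finset.range n,
            (1 - e2 ((y.1:ℂ) * τ + ((x₂ + (j:ℚ)/(n:ℚ) : ℚ):ℂ))) := rfl
      _ = 1 - e2 (((((n:ℚ) * y.1 : ℚ)):ℂ) * τ + ((((n:ℚ) * x₂ : ℚ)):ℂ)) := key_pos y.1
      _ = (thetaUnitPos ((n:ℚ)*x₁) ((n:ℚ)*x₂) τ ∘ Epos) ⟨i, y⟩ := by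
          simp only [Function.comp_apply, thetaUnitPos, e2, hEposdef]
          rw [sigmaEquiv_coe]
  have fact_neg : ∀ (i : Fin n) (y : {y : ℚ // (y - (x₁ + ((i:ℕ):ℚ)/(n:ℚ))).den = 1 ∧ y < 0}),
      ∏ j ∈ Finset.range n,
          thetaUnitNeg (x₁ + ((i:ℕ):ℚ)/(n:ℚ)) (x₂ + (j:ℚ)/(n:ℚ)) τ y
        = (thetaUnitNeg ((n:ℚ)*x₁) ((n:ℚ)*x₂) τ ∘ Eneg) ⟨i, y⟩ := by
    intro i y
    calc ∏ j ∈ Finset.range n,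
          thetaUnitNeg (x₁ + ((i:ℕ):ℚ)/(n:ℚ)) (x₂ + (j:ℚ)/(n:ℚ)) τ y
        = ∏ j ∈ Finset.range n,
            (1 - e2 (-((y.1:ℂ) * τ) - ((x₂ + (j:ℚ)/(n:ℚ) : ℚ):ℂ))) := rfl
      _ = 1 - e2 (-((((((n:ℚ) * y.1 : ℚ)):ℂ)) * τ) - ((((n:ℚ) * x₂ : ℚ)):ℂ)) := key_neg y.1
      _ = (thetaUnitNeg ((n:ℚ)*x₁) ((n:ℚ)*x₂) τ ∘ Eneg) ⟨i, y⟩ := by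
          simp only [Function.comp_apply, thetaUnitNeg, e2, hEnegdef]
          rw [sigmaEquiv_coe]
  -- fiberwise multipliability
  have hfibP : ∀ i : Fin n,
      Multipliable fun y => (thetaUnitPos ((n:ℚ)*x₁) ((n:ℚ)*x₂) τ ∘ Epos) ⟨i, y⟩ :=
    fun i => Multipliable.congr
      ⟨_, hasProd_prod fun j _ => (mult_pos _ _ τ hτ).hasProd⟩ (fact_pos i)
  have hfibN : ∀ i : Fin n,
      Multipliable fun y => (thetaUnitNeg ((n:ℚ)*x₁) ((n:ℚ)*x₂) τ ∘ Eneg) ⟨i, y⟩ :=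
    fun i => Multipliable.congr
      ⟨_, hasProd_prod fun j _ => (mult_neg _ _ τ hτ).hasProd⟩ (fact_neg i)
  -- positive part
  have posPart : ∏ i ∈ Finset.range n, ∏ j ∈ Finset.range n,
      (∏' y, thetaUnitPos (x₁ + (i : ℚ) / (n : ℚ)) (x₂ + (j : ℚ) / (n : ℚ)) τ y)
        = ∏' z, thetaUnitPos ((n:ℚ)*x₁) ((n:ℚ)*x₂) τ z := by
    calc ∏ i ∈ Finset.range n, ∏ j ∈ Finset.range n,
        (∏' y, thetaUnitPos (x₁ + (i : ℚ) / (n : ℚ)) (x₂ + (j : ℚ) / (n : ℚ)) τ y)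
        = ∏ i ∈ Finset.range n,
            ∏' (y : {y : ℚ // (y - (x₁ + (i : ℚ) / (n : ℚ))).den = 1 ∧ 0 < y}),
              ∏ j ∈ Finset.range n,
                thetaUnitPos (x₁ + (i : ℚ) / (n : ℚ)) (x₂ + (j : ℚ) / (n : ℚ)) τ y := by
          exact Finset.prod_congr rfl fun i _ =>
            (Multipliable.tprod_finsetProd fun j _ => mult_pos _ _ τ hτ).symm
      _ = ∏ i : Fin n,
            ∏' (y : {y : ℚ // (y - (x₁ + ((i:ℕ) : ℚ) / (n : ℚ))).den = 1 ∧ 0 < y}),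
              (thetaUnitPos ((n:ℚ)*x₁) ((n:ℚ)*x₂) τ ∘ Epos) ⟨i, y⟩ := by
          rw [← Fin.prod_univ_eq_prod_range (fun i =>
            ∏' (y : {y : ℚ // (y - (x₁ + (i : ℚ) / (n : ℚ))).den = 1 ∧ 0 < y}),
              ∏ j ∈ Finset.range n,
                thetaUnitPos (x₁ + (i : ℚ) / (n : ℚ)) (x₂ + (j : ℚ) / (n : ℚ)) τ y) n]
          exact Finset.prod_congr rfl fun i _ => tprod_congr fun y => fact_pos i y
      _ = ∏' (p : Σ i : Fin n,
            {y : ℚ // (y - (x₁ + ((i:ℕ) : ℚ) / (n : ℚ))).den = 1 ∧ 0 < y}),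
              (thetaUnitPos ((n:ℚ)*x₁) ((n:ℚ)*x₂) τ ∘ Epos) p := by
          rw [Multipliable.tprod_sigma' hfibP hmultSP, tprod_fintype]
      _ = ∏' z, thetaUnitPos ((n:ℚ)*x₁) ((n:ℚ)*x₂) τ z := Epos.tprod_eq _
  -- negative part
  have negPart : ∏ i ∈ Finset.range n, ∏ j ∈ Finset.range n,
      (∏' y, thetaUnitNeg (x₁ + (i : ℚ) / (n : ℚ)) (x₂ + (j : ℚ) / (n : ℚ)) τ y)
        = ∏' z, thetaUnitNeg ((n:ℚ)*x₁) ((n:ℚ)*x₂) τ z := by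
    calc ∏ i ∈ Finset.range n, ∏ j ∈ Finset.range n,
        (∏' y, thetaUnitNeg (x₁ + (i : ℚ) / (n : ℚ)) (x₂ + (j : ℚ) / (n : ℚ)) τ y)
        = ∏ i ∈ Finset.range n,
            ∏' (y : {y : ℚ // (y - (x₁ + (i : ℚ) / (n : ℚ))).den = 1 ∧ y < 0}),
              ∏ j ∈ Finset.range n,
                thetaUnitNeg (x₁ + (i : ℚ) / (n : ℚ)) (x₂ + (j : ℚ) / (n : ℚ)) τ y := by
          exact Finset.prod_congr rfl fun i _ =>
            (Multipliable.tprod_finsetProd fun j _ => mult_neg _ _ τ hτ).symm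
      _ = ∏ i : Fin n,
            ∏' (y : {y : ℚ // (y - (x₁ + ((i:ℕ) : ℚ) / (n : ℚ))).den = 1 ∧ y < 0}),
              (thetaUnitNeg ((n:ℚ)*x₁) ((n:ℚ)*x₂) τ ∘ Eneg) ⟨i, y⟩ := by
          rw [← Fin.prod_univ_eq_prod_range (fun i =>
            ∏' (y : {y : ℚ // (y - (x₁ + (i : ℚ) / (n : ℚ))).den = 1 ∧ y < 0}),
              ∏ j ∈ Finset.range n,
                thetaUnitNeg (x₁ + (i : ℚ) / (n : ℚ)) (x₂ + (j : ℚ) / (n : ℚ)) τ y) n]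
          exact Finset.prod_congr rfl fun i _ => tprod_congr fun y => fact_neg i y
      _ = ∏' (p : Σ i : Fin n,
            {y : ℚ // (y - (x₁ + ((i:ℕ) : ℚ) / (n : ℚ))).den = 1 ∧ y < 0}),
              (thetaUnitNeg ((n:ℚ)*x₁) ((n:ℚ)*x₂) τ ∘ Eneg) p := by
          rw [Multipliable.tprod_sigma' hfibN hmultSN, tprod_fintype]
      _ = ∏' z, thetaUnitNeg ((n:ℚ)*x₁) ((n:ℚ)*x₂) τ z := Eneg.tprod_eq _
  -- assemble
  simp only [thetaUnit]
  rw [← posPart, ← negPart, ← Finset.prod_mul_distrib]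
  exact Finset.prod_congr rfl fun i _ => Finset.prod_mul_distrib
end

section
/- For every (a,b) ∈ ℚ² with (a,b) ∉ ℤ² and every τ in the complex upper half-plane ℍ, the theta-unit satisfies u(a,b)(τ+1) = u(a, a+b)(τ). (This is the invariance of the theta-unit distribution under the action of the matrix T = [[1,1],[0,1]].) -/
/-- `e^{2πi q} = 1` for an integer rational `q`. -/
lemma exp_two_pi_I_rat_int (q : ℚ) (hq : q.den = 1) :
    Complex.exp (2 * (Real.pi : ℂ) * Complex.I * (q : ℂ)) = 1 := by
  have hq' : ((q.num : ℚ) : ℂ) = (q : ℂ) := by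
    exact_mod_cast congrArg (fun x : ℚ => (x : ℂ)) (Rat.den_eq_one_iff q |>.mp hq)
  rw [← hq']
  push_cast
  rw [show 2 * (Real.pi : ℂ) * Complex.I * (q.num : ℂ)
      = (q.num : ℂ) * (2 * (Real.pi : ℂ) * Complex.I) by ring]
  exact Complex.exp_int_mul_two_pi_mul_I q.num

/-- For every `(a,b) ∈ ℚ²` with `(a,b) ∉ ℤ²` and every `τ` in the upper
half-plane, the theta-unit satisfies `u(a,b)(τ+1) = u(a, a+b)(τ)` (invariance of the
theta-unit distribution under the matrix `T = [[1,1],[0,1]]`). -/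
theorem stmt9 (a b : ℚ) (h : ¬(a.den = 1 ∧ b.den = 1)) (τ : ℂ) (hτ : 0 < τ.im) :
    thetaUnit a b (τ + 1) = thetaUnit a (a + b) τ := by
  unfold thetaUnit
  refine congrArg₂ (· * ·) (tprod_congr fun y => ?_) (tprod_congr fun y => ?_)
  · unfold thetaUnitPos
    congr 1
    have key : Complex.exp (2 * (Real.pi : ℂ) * Complex.I * ((y.1 - a : ℚ) : ℂ)) = 1 :=
      exp_two_pi_I_rat_int _ y.2.1
    rw [show 2 * (Real.pi : ℂ) * Complex.I * ((y.1 : ℂ) * (τ + 1) + (b : ℂ))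
        = 2 * (Real.pi : ℂ) * Complex.I * ((y.1 : ℂ) * τ + ((a : ℚ) + b : ℚ))
          + 2 * (Real.pi : ℂ) * Complex.I * ((y.1 - a : ℚ) : ℂ) by push_cast; ring,
      Complex.exp_add, key, mul_one]
  · unfold thetaUnitNeg
    congr 1
    have key : Complex.exp (2 * (Real.pi : ℂ) * Complex.I * ((a - y.1 : ℚ) : ℂ)) = 1 := by
      refine exp_two_pi_I_rat_int _ ?_
      rw [show a - y.1 = -(y.1 - a) by ring, Rat.den_neg_eq_den]
      exact y.2.1
    rw [show 2 * (Real.pi : ℂ) * Complex.I * (-((y.1 : ℂ) * (τ + 1)) - (b : ℂ))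
        = 2 * (Real.pi : ℂ) * Complex.I * (-((y.1 : ℂ) * τ) - ((a : ℚ) + b : ℚ))
          + 2 * (Real.pi : ℂ) * Complex.I * ((a - y.1 : ℚ) : ℂ) by push_cast; ring,
      Complex.exp_add, key, mul_one]
end

section
/- Let c > 1 be an integer coprime to 6 and let a, b ∈ ℚ with a ≥ 0 and b ≥ 0. Then the rational number (c−1)/4 − c²(b − 1/2)(1 + ⌊a⌋) + bc²/2 + (bc − 1/2)(1 + ⌊ac⌋) − bc/2 − (⟨bc⟩ − 1/2)·( c(⟨a⟩ − 1/2) − (⟨ac⟩ − 1/2) ) is an integer, where ⟨x⟩ = x − ⌊x⌋ denotes the fractional part. (This expresses that the argument of the leading Fourier coefficient of the Kato–Siegel unit ϑ_c attached to (a,b) is congruent modulo ℤ to the value π_c([(a,b)+ℤ²]) = (⟨bc⟩−1/2)(c(⟨a⟩−1/2) − (⟨ac⟩−1/2)).) -/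
/-- Let `c > 1` be an integer coprime to `6` and `a, b ∈ ℚ` nonnegative.
Then the rational number
`(c−1)/4 − c²(b − 1/2)(1 + ⌊a⌋) + bc²/2 + (bc − 1/2)(1 + ⌊ac⌋) + bc²/2
  − bc/2 − (⟨bc⟩ − 1/2)·(c(⟨a⟩ − 1/2) − (⟨ac⟩ − 1/2))`
is an integer, where `⟨x⟩ = x − ⌊x⌋`. -/
theorem stmt11 (c : ℤ) (hc : 1 < c) (hcop : Int.gcd c 6 = 1)
    (a b : ℚ) (ha : 0 ≤ a) (hb : 0 ≤ b) :
    ∃ k : ℤ,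
      ((c : ℚ) - 1) / 4 - (c : ℚ) ^ 2 * (b - 1 / 2) * (1 + (⌊a⌋ : ℚ))
        + b * (c : ℚ) ^ 2 / 2
        + (b * (c : ℚ) - 1 / 2) * (1 + (⌊a * (c : ℚ)⌋ : ℚ))
        - b * (c : ℚ) / 2
        - (Int.fract (b * (c : ℚ)) - 1 / 2) *
            ((c : ℚ) * (Int.fract a - 1 / 2) - (Int.fract (a * (c : ℚ)) - 1 / 2))
      = (k : ℚ) := by
  have hcoprime : IsCoprime c 6 := Int.isCoprime_iff_gcd_eq_one.mpr hcop
  have hodd : ¬ (2:ℤ) ∣ c := by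
    intro h
    have := hcoprime.isUnit_of_dvd' h (by norm_num)
    rw [Int.isUnit_iff] at this
    omega
  obtain ⟨m, hm⟩ : ∃ m : ℤ, c = 2 * m + 1 := ⟨c / 2, by omega⟩
  set F := ⌊a⌋
  set G := ⌊a * (c:ℚ)⌋
  set H := ⌊b * (c:ℚ)⌋
  refine ⟨H * G - H * c * F + m * (c + 1) + c * F * m - H * m, ?_⟩
  have hmc : (c : ℚ) = 2 * (m : ℚ) + 1 := by push_cast [hm]; ring
  rw [Int.fract, Int.fract, Int.fract]
  push_cast
  linear_combination (((c:ℚ) + 1 + (c:ℚ) * (F:ℚ) - (H:ℚ)) / 2) * hmc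
end

section
/- Let γ = [[α,x],[β,y]] ∈ SL₂(ℤ), i.e. α, x, β, y ∈ ℤ with αy − βx = 1, with β > 0, and let a, b ∈ ℚ. For ℓ ∈ {0,…,β−1} set Q_ℓ := b + (α/β)(a+ℓ) and R_ℓ := (a+ℓ)/β. Then: (i) there is at most one ℓ ∈ {0,…,β−1} with Q_ℓ ∈ ℤ; (ii) such an ℓ exists if and only if aα + bβ ∈ ℤ; (iii) if Q_ℓ ∈ ℤ for some ℓ ∈ {0,…,β−1}, then R_ℓ + (ax + by) ∈ ℤ. -/
/-- Let `γ = [[α,x],[β,y]] ∈ SL₂(ℤ)` (so `α, x, β, y ∈ ℤ` with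
`αy − βx = 1`), with `β > 0`, and `a, b ∈ ℚ`. For `ℓ ∈ {0,…,β−1}` set
`Q_ℓ = b + (α/β)(a+ℓ)` and `R_ℓ = (a+ℓ)/β`. Then:
(i) at most one `ℓ` has `Q_ℓ ∈ ℤ`;
(ii) such an `ℓ` exists iff `aα + bβ ∈ ℤ`;
(iii) if `Q_ℓ ∈ ℤ` then `R_ℓ + (ax + by) ∈ ℤ`. -/
theorem stmt16 (α x y : ℤ) (β : ℕ) (hβ : 0 < β)
    (hdet : α * y - (β : ℤ) * x = 1) (a b : ℚ) :
    (∀ ℓ₁ ∈ Finset.range β, ∀ ℓ₂ ∈ Finset.range β,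
      (b + ((α : ℚ) / (β : ℚ)) * (a + (ℓ₁ : ℚ))).den = 1 →
      (b + ((α : ℚ) / (β : ℚ)) * (a + (ℓ₂ : ℚ))).den = 1 → ℓ₁ = ℓ₂) ∧
    ((∃ ℓ ∈ Finset.range β, (b + ((α : ℚ) / (β : ℚ)) * (a + (ℓ : ℚ))).den = 1) ↔
      (a * (α : ℚ) + b * (β : ℚ)).den = 1) ∧
    (∀ ℓ ∈ Finset.range β, (b + ((α : ℚ) / (β : ℚ)) * (a + (ℓ : ℚ))).den = 1 →
      ((a + (ℓ : ℚ)) / (β : ℚ) + (a * (x : ℚ) + b * (y : ℚ))).den = 1) := by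
  have hβZ : (0:ℤ) < (β:ℤ) := by exact_mod_cast hβ
  have hβQ : (β : ℚ) ≠ 0 := by positivity
  have hdetQ : (α:ℚ) * y - (β:ℚ) * x = 1 := by exact_mod_cast hdet
  have hden : ∀ q : ℚ, q.den = 1 ↔ ∃ z : ℤ, q = (z : ℚ) := by
    intro q
    constructor
    · intro h; exact ⟨q.num, ((Rat.den_eq_one_iff q).mp h).symm⟩
    · rintro ⟨z, rfl⟩; exact Rat.den_intCast z
  have hcop : IsCoprime ((β:ℤ)) α := ⟨-x, y, by linarith⟩
  refine ⟨?_, ?_, ?_⟩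
  · -- (i) uniqueness
    intro ℓ₁ h1 ℓ₂ h2 hd1 hd2
    obtain ⟨m₁, hm₁⟩ := (hden _).mp hd1
    obtain ⟨m₂, hm₂⟩ := (hden _).mp hd2
    have key : (α:ℚ) * ℓ₁ - α * ℓ₂ = β * (m₁ - m₂) := by
      field_simp at hm₁ hm₂
      linear_combination hm₁ - hm₂
    have keyZ : α * (ℓ₁:ℤ) - α * ℓ₂ = β * (m₁ - m₂) := by exact_mod_cast key
    have hdvd : (β:ℤ) ∣ α * ((ℓ₁:ℤ) - ℓ₂) := ⟨m₁ - m₂, by linarith⟩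
    have hdvd2 : (β:ℤ) ∣ ((ℓ₁:ℤ) - ℓ₂) := hcop.dvd_of_dvd_mul_left hdvd
    have hb1 := Finset.mem_range.mp h1
    have hb2 := Finset.mem_range.mp h2
    have : ((ℓ₁:ℤ) - ℓ₂) = 0 := by
      refine Int.eq_zero_of_abs_lt_dvd hdvd2 ?_
      rw [abs_sub_lt_iff]
      constructor <;> [skip; skip] <;> omega
    omega
  · -- (ii)
    constructor
    · rintro ⟨ℓ, hℓ, hd⟩
      obtain ⟨m, hm⟩ := (hden _).mp hd
      refine (hden _).mpr ⟨β * m - α * ℓ, ?_⟩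
      field_simp at hm ⊢
      push_cast
      linear_combination hm
    · intro hd
      obtain ⟨z, hz⟩ := (hden _).mp hd
      set L : ℤ := (-z * y) % β with hLdef
      have hL0 : 0 ≤ L := Int.emod_nonneg _ (by omega)
      have hLb : L < β := Int.emod_lt_of_pos _ hβZ
      have hmod : L % β = (-z * y) % β := Int.emod_emod_of_dvd _ dvd_rfl
      have hdvd : (β:ℤ) ∣ (z + α * L) := by
        have h1 : (β:ℤ) ∣ (L - (-z * y)) :=
          ⟨-((-z * y) / β), by rw [hLdef, Int.emod_def]; ring⟩
        obtain ⟨k, hk⟩ := h1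
        refine ⟨α * k - z * x, ?_⟩
        have hL' : L = -z * y + β * k := by linarith
        rw [hL']
        linear_combination (-z) * hdet
      obtain ⟨k, hk⟩ := hdvd
      refine ⟨L.toNat, Finset.mem_range.mpr (by omega), (hden _).mpr ⟨k, ?_⟩⟩
      have hLQ : ((L.toNat : ℕ) : ℚ) = (L : ℚ) := by
        exact_mod_cast congrArg (fun n : ℤ => (n : ℚ)) (Int.toNat_of_nonneg hL0)
      rw [hLQ]
      have hkQ : (z:ℚ) + α * L = β * k := by exact_mod_cast hk
      have h2 : (b + (α:ℚ)/β * (a + (L:ℚ))) * β = (k:ℚ) * β := by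
        field_simp
        linear_combination hkQ + hz
      exact mul_right_cancel₀ hβQ h2
  · -- (iii)
    intro ℓ hℓ hd
    obtain ⟨m, hm⟩ := (hden _).mp hd
    refine (hden _).mpr ⟨y * m - x * ℓ, ?_⟩
    push_cast
    field_simp at hm ⊢
    linear_combination (y:ℚ) * hm - (a + (ℓ:ℚ)) * hdetQ
end

section
/- Let D and β be positive integers with D dividing β, let α ∈ ℤ with gcd(α, D) = 1, and let a, b ∈ ℚ. Then Σ_{ℓ=0}^{β−1} 𝔹₁( D(a+ℓ)/β ) · 𝔹₁( b + (α/β)(a+ℓ) ) = Σ_{ℓ=0}^{β/D − 1} 𝔹₁( D(a+ℓ)/β ) · 𝔹₁( Db + (Dα/β)(a+ℓ) ). (This identity shows that the Darmon–Dasgupta measure value μ_{DD,δ}{∞ → α/β}([(a,b)+ℤ²]) equals Σ_{D∣N} n_D · C(α, β/D, a, bD).) -/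
/-- The first periodified Bernoulli function: `𝔹₁(x) = x − ⌊x⌋ − 1/2` for `x ∉ ℤ`,
`𝔹₁(x) = 0` for `x ∈ ℤ`. -/
def perB1 (x : ℚ) : ℚ := if x.den = 1 then 0 else Int.fract x - 1 / 2

lemma perB1_den_one {x : ℚ} (h : x.den = 1) : perB1 x = 0 := by simp [perB1, h]

lemma den_one_iff (x : ℚ) : x.den = 1 ↔ ∃ n : ℤ, x = (n : ℚ) := by
  constructor
  · intro h; exact ⟨x.num, ((Rat.den_eq_one_iff x).1 h).symm⟩
  · rintro ⟨n, rfl⟩; exact Rat.den_intCast n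

lemma perB1_add_int (x : ℚ) (n : ℤ) : perB1 (x + n) = perB1 x := by
  have hden : (x + (n:ℚ)).den = 1 ↔ x.den = 1 := by
    rw [den_one_iff, den_one_iff]
    constructor
    · rintro ⟨m, hm⟩; exact ⟨m - n, by push_cast; linarith⟩
    · rintro ⟨m, rfl⟩; exact ⟨m + n, by push_cast; ring⟩
  by_cases h : x.den = 1
  · rw [perB1_den_one h, perB1_den_one (hden.2 h)]
  · rw [perB1, perB1, if_neg h, if_neg (fun hh => h (hden.1 hh)), Int.fract_add_intCast]

lemma perB1_zero : perB1 0 = 0 := by simp [perB1]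

lemma perB1_of_mem {y : ℚ} (h0 : 0 < y) (h1 : y < 1) : perB1 y = y - 1/2 := by
  have hden : y.den ≠ 1 := by
    intro h
    obtain ⟨n, rfl⟩ := (den_one_iff y).1 h
    have h2 : (0:ℤ) < n := by exact_mod_cast h0
    have h3 : n < 1 := by exact_mod_cast h1
    omega
  rw [perB1, if_neg hden, Int.fract_eq_self.2 ⟨h0.le, h1⟩]

lemma sum_range_zmod (D : ℕ) [NeZero D] (f : ZMod D → ℚ) :
    ∑ j ∈ Finset.range D, f (j : ZMod D) = ∑ t : ZMod D, f t := by
  refine Finset.sum_nbij' (fun j => (j : ZMod D)) (fun t => t.val) ?_ ?_ ?_ ?_ ?_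
  · intro a _; exact Finset.mem_univ _
  · intro t _; exact Finset.mem_range.2 (ZMod.val_lt t)
  · intro a ha; exact ZMod.val_cast_of_lt (Finset.mem_range.1 ha)
  · intro t _; simp [ZMod.natCast_val, ZMod.cast_id]
  · intro a _; rfl

lemma perB1_int_div (D : ℕ) (hD : 0 < D) (x : ℚ) (c : ℤ) :
    perB1 (x + (c : ℚ) / D) = perB1 (x + (((c : ZMod D).val : ℚ)) / D) := by
  haveI : NeZero D := ⟨hD.ne'⟩
  have hv : (((c : ZMod D).val : ℤ)) = c % D := ZMod.val_intCast c
  have hDq : (D : ℚ) ≠ 0 := by positivity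
  have key : x + (c : ℚ) / D = (x + (((c : ZMod D).val : ℚ)) / D) + ((c / (D:ℤ) : ℤ) : ℚ) := by
    have hc : (c : ℚ) = ((c % D : ℤ) : ℚ) + ((c / (D:ℤ) : ℤ) : ℚ) * D := by
      exact_mod_cast (Int.emod_add_ediv_mul c D).symm
    have hval : (((c : ZMod D).val : ℚ)) = ((c % D : ℤ) : ℚ) := by
      rw [← hv]; push_cast; ring
    rw [hc, hval]
    field_simp
    ring
  rw [key, perB1_add_int]

lemma gauss_sum (n : ℕ) : ∑ j ∈ Finset.range n, (j : ℚ) = n * (n - 1) / 2 := by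
  induction n with
  | zero => simp
  | succ k ih => rw [Finset.sum_range_succ, ih]; push_cast; ring

lemma distrib_base (D : ℕ) (hD : 0 < D) (x : ℚ) (h0 : 0 ≤ x) (h1 : x < 1 / D) :
    ∑ j ∈ Finset.range D, perB1 (x + (j : ℚ) / D) = perB1 ((D : ℚ) * x) := by
  have hDq : (0:ℚ) < (D : ℚ) := by exact_mod_cast hD
  have hfrac : ∀ j : ℕ, j < D → (0:ℚ) < x + (j:ℚ)/D → perB1 (x + (j:ℚ)/D) = x + (j:ℚ)/D - 1/2 := by
    intro j hj hpos
    apply perB1_of_mem hpos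
    have hj1 : (j:ℚ) + 1 ≤ (D:ℚ) := by exact_mod_cast hj
    have h2 : (j:ℚ)/D ≤ ((D:ℚ) - 1)/D := by gcongr; linarith
    have h3 : ((D:ℚ) - 1)/D = 1 - 1/D := by field_simp
    linarith
  rcases eq_or_lt_of_le h0 with h | h
  · -- x = 0
    subst h
    obtain ⟨n, rfl⟩ : ∃ n, D = n + 1 := ⟨D - 1, by omega⟩
    rw [Finset.sum_range_succ']
    have e0 : (0:ℚ) + ((0:ℕ):ℚ) / ((n+1:ℕ):ℚ) = 0 := by norm_num
    rw [e0, perB1_zero, add_zero]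
    have hterm : ∀ i ∈ Finset.range n,
        perB1 ((0:ℚ) + ((i+1:ℕ):ℚ) / ((n+1:ℕ):ℚ)) = (0:ℚ) + ((i+1:ℕ):ℚ) / ((n+1:ℕ):ℚ) - 1/2 := by
      intro i hi
      have hi' := Finset.mem_range.1 hi
      apply hfrac (i+1) (by omega)
      have : (0:ℚ) < ((i+1:ℕ):ℚ) := by exact_mod_cast Nat.succ_pos i
      positivity
    rw [Finset.sum_congr rfl hterm, mul_zero, perB1_zero]
    simp only [zero_add]
    push_cast
    rw [Finset.sum_sub_distrib, ← Finset.sum_div, Finset.sum_add_distrib, gauss_sum]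
    simp only [Finset.sum_const, Finset.card_range, nsmul_eq_mul, mul_one]
    have hne : ((n:ℚ)+1) ≠ 0 := by positivity
    field_simp
    ring
  · -- 0 < x
    have hterm : ∀ j ∈ Finset.range D, perB1 (x + (j:ℚ)/D) = x + (j:ℚ)/D - 1/2 := by
      intro j hj
      apply hfrac j (Finset.mem_range.1 hj)
      have : (0:ℚ) ≤ (j:ℚ)/D := by positivity
      linarith
    rw [Finset.sum_congr rfl hterm]
    have hDx1 : (D:ℚ) * x < 1 := by
      have := (mul_lt_mul_of_pos_left h1 hDq)
      rwa [mul_one_div, div_self hDq.ne'] at this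
    rw [perB1_of_mem (by positivity) hDx1]
    rw [Finset.sum_sub_distrib, Finset.sum_add_distrib, ← Finset.sum_div, gauss_sum]
    simp only [Finset.sum_const, Finset.card_range, nsmul_eq_mul]
    field_simp
    ring

lemma isUnit_int_cast (D : ℕ) (α : ℤ) (hcop : Int.gcd α (D : ℤ) = 1) :
    IsUnit ((α : ZMod D)) := by
  have hco : Nat.Coprime α.natAbs D := by
    have h2 : Int.gcd α (D:ℤ) = Nat.gcd α.natAbs D := by
      unfold Int.gcd
      congr 1
    rwa [h2] at hcop
  have h1 : IsUnit ((α.natAbs : ZMod D)) := (ZMod.isUnit_iff_coprime _ _).2 hco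
  rcases Int.natAbs_eq α with h | h
  · rw [h, Int.cast_natCast]; exact h1
  · rw [h, Int.cast_neg, Int.cast_natCast]; exact h1.neg

lemma sum_zmod_perB1_unit (D : ℕ) [NeZero D] (x : ℚ) (u : (ZMod D)ˣ) :
    ∑ t : ZMod D, perB1 (x + (((u : ZMod D) * t).val : ℚ) / D)
      = ∑ t : ZMod D, perB1 (x + ((t.val : ℚ)) / D) :=
  Fintype.sum_equiv (Units.mulLeft u) _ _ (fun t => rfl)

lemma sum_zmod_perB1_add (D : ℕ) [NeZero D] (x : ℚ) (c : ZMod D) :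
    ∑ t : ZMod D, perB1 (x + ((c + t).val : ℚ) / D)
      = ∑ t : ZMod D, perB1 (x + ((t.val : ℚ)) / D) :=
  Fintype.sum_equiv (Equiv.addLeft c) _ _ (fun t => rfl)

/-- general distribution relation -/
lemma distrib (D : ℕ) (hD : 0 < D) (x : ℚ) :
    ∑ j ∈ Finset.range D, perB1 (x + (j : ℚ) / D) = perB1 ((D : ℚ) * x) := by
  haveI : NeZero D := ⟨hD.ne'⟩
  have hDq : (0:ℚ) < (D : ℚ) := by exact_mod_cast hD
  set k : ℤ := ⌊(D:ℚ) * x⌋ with hk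
  set x₀ : ℚ := x - (k : ℚ) / D with hx₀
  have hx : x = x₀ + (k:ℚ)/D := by rw [hx₀]; ring
  have h0 : 0 ≤ x₀ := by
    have : (k:ℚ) ≤ (D:ℚ)*x := Int.floor_le _
    rw [hx₀]
    rw [sub_nonneg, div_le_iff₀ hDq]
    linarith [this]
  have h1 : x₀ < 1 / D := by
    have : (D:ℚ)*x < k + 1 := Int.lt_floor_add_one _
    rw [hx₀, sub_lt_iff_lt_add, ← add_div, lt_div_iff₀ hDq]
    linarith [this]
  have step1 : ∀ j ∈ Finset.range D,
      perB1 (x + (j:ℚ)/D) = perB1 (x₀ + (((k + (j:ℤ) : ℤ) : ZMod D).val : ℚ) / D) := by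
    intro j hj
    have : x + (j:ℚ)/D = x₀ + ((k + (j:ℤ) : ℤ):ℚ)/D := by
      rw [hx]; push_cast; ring
    rw [this, perB1_int_div D hD]
  rw [Finset.sum_congr rfl step1]
  have step2 : ∑ j ∈ Finset.range D,
      perB1 (x₀ + (((k + (j:ℤ) : ℤ) : ZMod D).val : ℚ) / D)
      = ∑ t : ZMod D, perB1 (x₀ + (((k : ZMod D) + t).val : ℚ) / D) := by
    have := sum_range_zmod D (fun t => perB1 (x₀ + (((k : ZMod D) + t).val : ℚ) / D))
    rw [← this]
    refine Finset.sum_congr rfl fun j _ => ?_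
    congr 2
    push_cast
    ring
  rw [step2, sum_zmod_perB1_add, ← sum_range_zmod D (fun t => perB1 (x₀ + ((t.val : ℚ)) / D))]
  have step3 : ∀ j ∈ Finset.range D,
      perB1 (x₀ + ((((j:ℕ) : ZMod D).val : ℚ)) / D) = perB1 (x₀ + (j:ℚ)/D) := by
    intro j hj
    rw [ZMod.val_cast_of_lt (Finset.mem_range.1 hj)]
  rw [Finset.sum_congr rfl step3, distrib_base D hD x₀ h0 h1]
  have : (D:ℚ) * x = (D:ℚ) * x₀ + (k:ℚ) := by
    rw [hx]; field_simp
  rw [this, perB1_add_int]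

/-- sum twisted by a unit -/
lemma sum_coprime (D : ℕ) (hD : 0 < D) (α : ℤ) (hcop : Int.gcd α (D : ℤ) = 1) (x : ℚ) :
    ∑ j ∈ Finset.range D, perB1 (x + ((α * (j:ℤ) : ℤ) : ℚ) / D)
      = perB1 ((D : ℚ) * x) := by
  haveI : NeZero D := ⟨hD.ne'⟩
  obtain ⟨u, hu⟩ := isUnit_int_cast D α hcop
  have step1 : ∀ j ∈ Finset.range D,
      perB1 (x + ((α * (j:ℤ) : ℤ) : ℚ) / D)
        = perB1 (x + ((((u : ZMod D) * ((j:ℕ) : ZMod D)).val : ℚ)) / D) := by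
    intro j _
    rw [perB1_int_div D hD]
    congr 3
    push_cast [hu]
    ring
  rw [Finset.sum_congr rfl step1,
    sum_range_zmod D (fun t => perB1 (x + (((u : ZMod D) * t).val : ℚ) / D)),
    sum_zmod_perB1_unit,
    ← sum_range_zmod D (fun t => perB1 (x + ((t.val : ℚ)) / D))]
  have step3 : ∀ j ∈ Finset.range D,
      perB1 (x + ((((j:ℕ) : ZMod D).val : ℚ)) / D) = perB1 (x + (j:ℚ)/D) := by
    intro j hj
    rw [ZMod.val_cast_of_lt (Finset.mem_range.1 hj)]
  rw [Finset.sum_congr rfl step3, distrib D hD]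

lemma reindex (m D : ℕ) (hm : 0 < m) (f : ℕ → ℚ) :
    ∑ ℓ ∈ Finset.range (D * m), f ℓ
      = ∑ i ∈ Finset.range m, ∑ j ∈ Finset.range D, f (i + m * j) := by
  rw [← Finset.sum_product']
  refine Finset.sum_nbij' (fun ℓ => (ℓ % m, ℓ / m)) (fun p => p.1 + m * p.2) ?_ ?_ ?_ ?_ ?_
  · intro ℓ hℓ
    have hl := Finset.mem_range.1 hℓ
    refine Finset.mem_product.2 ⟨Finset.mem_range.2 (Nat.mod_lt _ hm), Finset.mem_range.2 ?_⟩
    rw [Nat.div_lt_iff_lt_mul hm]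
    omega
  · intro p hp
    obtain ⟨h1, h2⟩ := Finset.mem_product.1 hp
    have h1 := Finset.mem_range.1 h1
    have h2 := Finset.mem_range.1 h2
    refine Finset.mem_range.2 ?_
    have hms : m * (p.2 + 1) = m * p.2 + m := Nat.mul_succ m p.2
    calc p.1 + m * p.2 < m * (p.2 + 1) := by omega
      _ ≤ m * D := Nat.mul_le_mul_left m (by omega)
      _ = D * m := Nat.mul_comm m D
  · intro ℓ _; exact Nat.mod_add_div ℓ m
  · intro p hp
    obtain ⟨h1, _⟩ := Finset.mem_product.1 hp
    have h1 := Finset.mem_range.1 h1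
    ext
    · simp only
      rw [Nat.add_mul_mod_self_left, Nat.mod_eq_of_lt h1]
    · simp only
      rw [Nat.add_mul_div_left _ _ hm, Nat.div_eq_of_lt h1, Nat.zero_add]
  · intro ℓ _; exact congrArg f (Nat.mod_add_div ℓ m).symm

/-- Let `D, β` be positive integers with `D ∣ β`, `α ∈ ℤ` with
`gcd(α,D) = 1`, and `a, b : ℚ`. Then
`Σ_{ℓ=0}^{β−1} 𝔹₁(D(a+ℓ)/β)·𝔹₁(b + (α/β)(a+ℓ))
   = Σ_{ℓ=0}^{β/D−1} 𝔹₁(D(a+ℓ)/β)·𝔹₁(Db + (Dα/β)(a+ℓ))`. -/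
theorem stmt17 (D β : ℕ) (hD : 0 < D) (hβ : 0 < β) (hdvd : D ∣ β)
    (α : ℤ) (hcop : Int.gcd α (D : ℤ) = 1) (a b : ℚ) :
    ∑ ℓ ∈ Finset.range β,
        perB1 ((D : ℚ) * (a + (ℓ : ℚ)) / (β : ℚ)) *
          perB1 (b + ((α : ℚ) / (β : ℚ)) * (a + (ℓ : ℚ)))
      = ∑ ℓ ∈ Finset.range (β / D),
          perB1 ((D : ℚ) * (a + (ℓ : ℚ)) / (β : ℚ)) *
            perB1 ((D : ℚ) * b + ((D : ℚ) * (α : ℚ) / (β : ℚ)) * (a + (ℓ : ℚ))) := by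
  obtain ⟨m, rfl⟩ := hdvd
  have hm : 0 < m := Nat.pos_of_ne_zero (by rintro rfl; simp at hβ)
  rw [Nat.mul_div_cancel_left m hD]
  have hDq : ((D:ℚ)) ≠ 0 := by positivity
  have hmq : ((m:ℚ)) ≠ 0 := by positivity
  have hβq : ((D*m : ℕ) : ℚ) = (D:ℚ) * m := by push_cast; ring
  rw [reindex m D hm]
  refine Finset.sum_congr rfl fun i hi => ?_
  -- inner sum
  have hfst : ∀ j ∈ Finset.range D,
      perB1 ((D : ℚ) * (a + ((i + m * j : ℕ) : ℚ)) / ((D*m : ℕ) : ℚ))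
        = perB1 ((D : ℚ) * (a + (i : ℚ)) / ((D*m : ℕ) : ℚ)) := by
    intro j _
    have key : (D : ℚ) * (a + ((i + m * j : ℕ) : ℚ)) / ((D*m : ℕ) : ℚ)
        = (D : ℚ) * (a + (i : ℚ)) / ((D*m : ℕ) : ℚ) + ((j:ℤ):ℚ) := by
      rw [hβq]; push_cast; field_simp; ring
    rw [key, perB1_add_int]
  have hsnd : ∀ j ∈ Finset.range D,
      b + ((α : ℚ) / ((D*m : ℕ) : ℚ)) * (a + ((i + m * j : ℕ) : ℚ))
        = (b + ((α : ℚ) / ((D*m : ℕ) : ℚ)) * (a + (i : ℚ))) + ((α * (j:ℤ) : ℤ):ℚ) / D := by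
    intro j _
    rw [hβq]; push_cast; field_simp; ring
  calc ∑ j ∈ Finset.range D,
        perB1 ((D : ℚ) * (a + ((i + m * j : ℕ) : ℚ)) / ((D*m : ℕ) : ℚ)) *
          perB1 (b + ((α : ℚ) / ((D*m : ℕ) : ℚ)) * (a + ((i + m * j : ℕ) : ℚ)))
      = perB1 ((D : ℚ) * (a + (i : ℚ)) / ((D*m : ℕ) : ℚ)) *
          ∑ j ∈ Finset.range D,
            perB1 ((b + ((α : ℚ) / ((D*m : ℕ) : ℚ)) * (a + (i : ℚ))) + ((α * (j:ℤ) : ℤ):ℚ) / D) := by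
        rw [Finset.mul_sum]
        refine Finset.sum_congr rfl fun j hj => ?_
        rw [hfst j hj, hsnd j hj]
    _ = perB1 ((D : ℚ) * (a + (i : ℚ)) / ((D*m : ℕ) : ℚ)) *
          perB1 ((D:ℚ) * (b + ((α : ℚ) / ((D*m : ℕ) : ℚ)) * (a + (i : ℚ)))) := by
        rw [sum_coprime D hD α hcop]
    _ = perB1 ((D : ℚ) * (a + (i : ℚ)) / ((D*m : ℕ) : ℚ)) *
          perB1 ((D : ℚ) * b + ((D : ℚ) * (α : ℚ) / ((D*m : ℕ) : ℚ)) * (a + (i : ℚ))) := by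
        congr 2
        rw [hβq]; field_simp
end

section
/- Let c > 1 be an integer coprime to 6, let N be a positive integer, and let (n_D)_{D ∣ N, D>0} be integers indexed by the positive divisors of N satisfying Σ_{D ∣ N} n_D · D = 0. For a, b ∈ ℚ define Ψ(a,b) := −(c/2)·𝟙[a ∈ ℤ]·( c·𝔹₁(b) − 𝔹₁(bc) ) − (1/2)·𝟙[b ∈ ℤ]·( c·𝔹₁(a) − 𝔹₁(ac) ) + ( c·𝔹₁(a) − 𝔹₁(ac) )·𝔹₁(bc), where 𝟙[P] is 1 if P holds and 0 otherwise. Then for all a, b ∈ ℚ the rational number 12 · Σ_{D ∣ N, D>0} n_D · Ψ(a, bD) is an integer. -/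
/-- `Ψ(a,b) = −(c/2)·𝟙[a ∈ ℤ]·(c𝔹₁(b) − 𝔹₁(bc)) − (1/2)·𝟙[b ∈ ℤ]·(c𝔹₁(a) − 𝔹₁(ac))
             + (c𝔹₁(a) − 𝔹₁(ac))·𝔹₁(bc)`. -/
def Psi (c : ℕ) (a b : ℚ) : ℚ :=
  -((c : ℚ) / 2) * (if a.den = 1 then 1 else 0) *
      ((c : ℚ) * perB1 b - perB1 (b * (c : ℚ)))
  - (1 / 2) * (if b.den = 1 then 1 else 0) *
      ((c : ℚ) * perB1 a - perB1 (a * (c : ℚ)))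
  + ((c : ℚ) * perB1 a - perB1 (a * (c : ℚ))) * perB1 (b * (c : ℚ))

lemma perB1_half (x : ℚ) : ∃ m : ℤ, perB1 x = x - (m : ℚ) / 2 := by
  unfold perB1
  split_ifs with h
  · refine ⟨2 * x.num, ?_⟩
    have hx : (x.num : ℚ) = x := by
      conv_rhs => rw [← Rat.num_div_den x, h]
      norm_num
    push_cast
    rw [hx]; ring
  · refine ⟨2 * ⌊x⌋ + 1, ?_⟩
    rw [Int.fract]
    push_cast
    ring

lemma key (c : ℕ) (a : ℚ) (ma : ℤ)
    (hma : (c : ℚ) * perB1 a - perB1 (a * (c : ℚ)) = (ma : ℚ) / 2) (y : ℚ) :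
    ∃ z : ℤ, 12 * Psi c a y = (z : ℚ) + 6 * c * ma * y := by
  obtain ⟨p, hp⟩ := perB1_half y
  obtain ⟨q, hq⟩ := perB1_half (y * (c : ℚ))
  refine ⟨-3 * c * (if a.den = 1 then 1 else 0) * (q - c * p)
      - 3 * (if y.den = 1 then 1 else 0) * ma - 3 * ma * q, ?_⟩
  rw [Psi, hma, hp, hq]
  split_ifs <;> push_cast <;> ring

/-- Let `c > 1` be an integer coprime to `6`, `N` a positive integer, and
`(n_D)_{D ∣ N}` integers indexed by the positive divisors of `N` with `Σ_{D∣N} n_D·D = 0`.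
Then for all `a, b ∈ ℚ` the rational number `12·Σ_{D∣N} n_D·Ψ(a, bD)` is an integer. -/
theorem stmt18 (c : ℕ) (hc : 1 < c) (hcop : Nat.Coprime c 6)
    (N : ℕ) (hN : 0 < N) (n : ℕ → ℤ)
    (hsum : ∑ D ∈ N.divisors, n D * (D : ℤ) = 0) (a b : ℚ) :
    ∃ k : ℤ, 12 * ∑ D ∈ N.divisors, (n D : ℚ) * Psi c a (b * (D : ℚ)) = (k : ℚ) := by
  obtain ⟨p, hp⟩ := perB1_half a
  obtain ⟨q, hq⟩ := perB1_half (a * (c : ℚ))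
  have hma : (c : ℚ) * perB1 a - perB1 (a * (c : ℚ)) = ((q - c * p : ℤ) : ℚ) / 2 := by
    rw [hp, hq]; push_cast; ring
  choose z hz using fun D : ℕ => key c a (q - c * p) hma (b * (D : ℚ))
  refine ⟨∑ D ∈ N.divisors, n D * z D, ?_⟩
  have h0 : ∑ D ∈ N.divisors, (n D : ℚ) * (D : ℚ) = 0 := by
    have := congrArg (fun t : ℤ => (t : ℚ)) hsum
    push_cast at this
    simpa using this
  rw [Finset.mul_sum]
  push_cast
  calc ∑ D ∈ N.divisors, 12 * ((n D : ℚ) * Psi c a (b * (D : ℚ)))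
      = ∑ D ∈ N.divisors, ((n D : ℚ) * (z D : ℚ)
          + (6 * c * ((q - c * p : ℤ) : ℚ) * b) * ((n D : ℚ) * (D : ℚ))) := by
        refine Finset.sum_congr rfl fun D _ => ?_
        linear_combination (n D : ℚ) * hz D
    _ = ∑ D ∈ N.divisors, (n D : ℚ) * (z D : ℚ) := by
        rw [Finset.sum_add_distrib, ← Finset.mul_sum, h0, mul_zero, add_zero]
    _ = ∑ D ∈ N.divisors, (n D : ℚ) * (z D : ℚ) := rfl
end
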